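/- arXiv:1208.5978 — 4 statements merged into one kernel-verified Lean document; each statement's English description precedes it below -/
import Mathlib

section
/- For all k ≥ 3 and all 2 ≤ ℓ ≤ k−1, the property Dev(ℓ) does not imply Dev(ℓ+1): there exists a hypergraph sequence of k-uniform hypergraphs satisfying Dev(ℓ) but failing Dev(ℓ+1). -/
open Filter Finset Asymptotics

/-- A hypergraph sequence: for each `n`, the edge set of a hypergraph
on the vertex set `Fin n`. -/
abbrev HSeq : Type := (n : ℕ) → Finset (Finset (Fin n))

/-- The sequence is `k`-uniform: every edge has exactly `k` vertices. -/
def UniformSeq (k : ℕ) (H : HSeq) : Prop :=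
  ∀ n : ℕ, ∀ e ∈ H n, e.card = k

/-- A proper partition of `k`: an (ordered list representing an unordered) collection of
at least two positive integers summing to `k`. -/
def ProperPartition (k : ℕ) (π : List ℕ) : Prop :=
  2 ≤ π.length ∧ (∀ m ∈ π, 0 < m) ∧ π.sum = k

/-- `π'` is a refinement of `π`: there is a surjection `φ` from the parts of `π'`
to the parts of `π` so that each part of `π` is the sum of its `φ`-preimages. -/
def IsRefinement (π' π : List ℕ) : Prop :=
  ∃ φ : Fin π'.length → Fin π.length, Function.Surjective φ ∧
    ∀ i : Fin π.length, π.get i = ∑ j ∈ Finset.univ.filter (fun j => φ j = i), π'.get j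

/-- `e(S_1, …, S_t)`: the number of tuples `(s_1, …, s_t) ∈ S_1 × ⋯ × S_t` whose
union is an edge of `H`. -/
def eCount {n : ℕ} (H : Finset (Finset (Fin n))) {t : ℕ}
    (S : Fin t → Finset (Finset (Fin n))) : ℕ :=
  ((Fintype.piFinset S).filter (fun s => Finset.univ.biUnion s ∈ H)).card

/-- The property `Expand_p(π)` of a hypergraph sequence. -/
def Expand (k : ℕ) (p : ℝ) (π : List ℕ) (H : HSeq) : Prop :=
  ∃ f : ℕ → ℝ, f =o[atTop] (fun n => (n : ℝ) ^ k) ∧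
    ∀ n : ℕ, ∀ S : Fin π.length → Finset (Finset (Fin n)),
      (∀ i : Fin π.length, ∀ s ∈ S i, s.card = π.get i) →
      |(eCount (H n) S : ℝ) - p * ∏ i : Fin π.length, ((S i).card : ℝ)| ≤ f n

/-- The property `PartiteExpand_p(π)`: the `Expand` estimate is only required when the
vertex sets `V(S_i)` are pairwise disjoint. -/
def PartiteExpand (k : ℕ) (p : ℝ) (π : List ℕ) (H : HSeq) : Prop :=
  ∃ f : ℕ → ℝ, f =o[atTop] (fun n => (n : ℝ) ^ k) ∧
    ∀ n : ℕ, ∀ S : Fin π.length → Finset (Finset (Fin n)),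
      (∀ i : Fin π.length, ∀ s ∈ S i, s.card = π.get i) →
      (∀ i j : Fin π.length, i ≠ j →
        Disjoint ((S i).biUnion id) ((S j).biUnion id)) →
      |(eCount (H n) S : ℝ) - p * ∏ i : Fin π.length, ((S i).card : ℝ)| ≤ f n

/-- `K_k(G)`: the `k`-element vertex subsets all of whose `ℓ`-element subsets are
edges of the `ℓ`-uniform hypergraph `G`. -/
def cliqueSet (k ℓ : ℕ) {n : ℕ} (G : Finset (Finset (Fin n))) : Finset (Finset (Fin n)) :=
  (Finset.powersetCard k (Finset.univ : Finset (Fin n))).filter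
    (fun T => ∀ S ∈ Finset.powersetCard ℓ T, S ∈ G)

/-- The property `CD_p(ℓ)` of a hypergraph sequence. -/
def CD (k : ℕ) (p : ℝ) (ℓ : ℕ) (H : HSeq) : Prop :=
  ∃ f : ℕ → ℝ, f =o[atTop] (fun n => (n : ℝ) ^ k) ∧
    ∀ n : ℕ, ∀ G : Finset (Finset (Fin n)), (∀ e ∈ G, e.card = ℓ) →
      |(((cliqueSet k ℓ G) ∩ H n).card : ℝ) - p * ((cliqueSet k ℓ G).card : ℝ)| ≤ f n

/-- The property `CD_p(ℓ,s)` of a hypergraph sequence: `G` ranges over `ℓ`-uniform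
hypergraphs whose vertex set `W` is a subset of `Fin n`, and one counts `k`-sets
inducing at least `s` edges of `G`. -/
def CDs (k : ℕ) (p : ℝ) (ℓ s : ℕ) (H : HSeq) : Prop :=
  ∃ f : ℕ → ℝ, f =o[atTop] (fun n => (n : ℝ) ^ k) ∧
    ∀ n : ℕ, ∀ W : Finset (Fin n), ∀ G : Finset (Finset (Fin n)),
      (∀ e ∈ G, e.card = ℓ ∧ e ⊆ W) →
      |(((H n).filter (fun T => s ≤ (G.filter (fun e => e ⊆ T)).card)).card : ℝ) -
        p * (((Finset.powersetCard k W).filter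
          (fun T => s ≤ (G.filter (fun e => e ⊆ T)).card)).card : ℝ)| ≤ f n

/-- The `k`-tuple `(x_1, …, x_{k-ℓ}, y_{1,ε_1}, …, y_{ℓ,ε_ℓ})`. -/
def octTuple {n : ℕ} (k ℓ : ℕ) (x : Fin (k - ℓ) → Fin n) (y : Fin ℓ × Fin 2 → Fin n)
    (ε : Fin ℓ → Fin 2) (i : Fin k) : Fin n :=
  if h : (i : ℕ) < k - ℓ then x ⟨(i : ℕ), h⟩
  else
    have hi : (i : ℕ) - (k - ℓ) < ℓ := by have := i.isLt; omega
    y (⟨(i : ℕ) - (k - ℓ), hi⟩, ε ⟨(i : ℕ) - (k - ℓ), hi⟩)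

/-- The squashed octahedron `O[x⃗, y⃗]`: the collection of `k`-element sets of the form
`{x_1, …, x_{k-ℓ}, y_{1,i_1}, …, y_{ℓ,i_ℓ}}`. -/
def octSet {n : ℕ} (k ℓ : ℕ) (x : Fin (k - ℓ) → Fin n)
    (y : Fin ℓ × Fin 2 → Fin n) : Finset (Finset (Fin n)) :=
  (Finset.image (fun ε : Fin ℓ → Fin 2 =>
    Finset.image (octTuple k ℓ x y ε) Finset.univ) Finset.univ).filter
    (fun T => T.card = k)

/-- `Σ (−1)^{|O[x⃗,y⃗] ∩ E(H)|}` over all choices of vertices. -/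
noncomputable def devSum (k ℓ : ℕ) {n : ℕ} (H : Finset (Finset (Fin n))) : ℝ :=
  ∑ x : Fin (k - ℓ) → Fin n, ∑ y : Fin ℓ × Fin 2 → Fin n,
    (-1 : ℝ) ^ ((octSet k ℓ x y ∩ H).card)

/-- The property `Dev(ℓ)` of a hypergraph sequence. -/
def Dev (k ℓ : ℕ) (H : HSeq) : Prop :=
  (fun n => devSum k ℓ (H n)) =o[atTop] (fun n => (n : ℝ) ^ (k + ℓ))

open scoped Classical in
/-- `dev_{ℓ,P}(H)`: the deviation sum restricted to octahedra all of whose `k`-tuples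
lie in `P`. -/
noncomputable def devP (k ℓ : ℕ) {n : ℕ} (H : Finset (Finset (Fin n)))
    (P : Set (Fin k → Fin n)) : ℝ :=
  ∑ x : Fin (k - ℓ) → Fin n, ∑ y : Fin ℓ × Fin 2 → Fin n,
    if ∀ ε : Fin ℓ → Fin 2, octTuple k ℓ x y ε ∈ P then
      (-1 : ℝ) ^ ((octSet k ℓ x y ∩ H).card)
    else 0

/-- `Q ⊆ V(H)^k` is complete in coordinate `i`: membership in `Q` only depends on the
coordinates other than `i`. -/
def CompleteInCoord {n k : ℕ} (Q : Set (Fin k → Fin n)) (i : Fin k) : Prop :=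
  ∃ Q' : Set ({j : Fin k // j ≠ i} → Fin n),
    Q = {z : Fin k → Fin n | (fun j : {j : Fin k // j ≠ i} => z j.1) ∈ Q'}


/-!
The counterexample labels each vertex `v < n` by its last `t ≈ ½ log₂ n` binary digits and takes
as edges the `k`-sets `e` for which `∑_{i < t} C(dᵢ(e), ℓ)` is odd, where `dᵢ(e)` is the number of
vertices of `e` whose `i`-th digit is `1`.

For an `L`-octahedron `O[x⃗, y⃗]` with distinct vertices, `(−1)^{|O ∩ H|}` is then the product over
the digits `i` of `−1` raised to the cube sum `∑_{ε ∈ {0,1}^L} C(X + ∑ⱼ zⱼ(εⱼ), ℓ)`, where `X`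
counts the `x`-vertices and `zⱼ(b)` is the digit of `y_{j,b}`. Expanding by Vandermonde, every
monomial in fewer than `L` of the `zⱼ` is summed `2^(positive)` times, so the cube sum is even when
`ℓ < L` and congruent to `∏ⱼ (zⱼ(0) + zⱼ(1))` when `ℓ = L`.

* For `L = ℓ + 1` every such octahedron contributes `+1`, so `dev_{ℓ+1}(H) ~ n^{k+ℓ+1}`.
* For `L = ℓ` it contributes `∏ᵢ (−1)^[y_{j,0}, y_{j,1} differ in digit i for every j]`, which
  depends only on the digit patterns of `y⃗`. These are equidistributed up to relative error
  `2^t / n`, and for uniform patterns the digits are independent, so the signs add up to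
  `n^{2ℓ} (1 − 2^{1−ℓ})^t + O(ℓ 2^t n^{2ℓ−1}) = o(n^{2ℓ})`.

Octahedra with a repeated vertex number `O(n^{k+L−1})` in both cases.
-/

namespace DevCounterexample

section Cube

variable {ι : Type*} [Fintype ι] [DecidableEq ι]

lemma choose_sum_eq_sum_powersetCard_prod (z : ι → Fin 2) (m : ℕ) :
    (∑ j, (z j : ℕ)).choose m = ∑ J ∈ powersetCard m univ, ∏ j ∈ J, (z j : ℕ) := by
  set A : Finset ι := {j | z j = 1}
  have hz : ∀ j, (z j : ℕ) = if j ∈ A then 1 else 0 := by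
    intro j
    simp only [A, mem_filter, mem_univ, true_and]
    split_ifs <;> fin_omega
  rw [Fintype.sum_congr _ _ hz, sum_boole, Nat.cast_id, filter_mem_eq_inter, univ_inter,
    ← card_powersetCard, card_eq_sum_ones]
  refine sum_subset_zero_on_sdiff (powersetCard_mono (subset_univ A)) (fun J hJ => ?_)
    fun J hJ => ?_
  · rw [Finset.mem_sdiff, mem_powersetCard, mem_powersetCard, not_and] at hJ
    obtain ⟨j, hjJ, hjA⟩ := not_subset.1 fun h => hJ.2 h hJ.1.2
    exact prod_eq_zero hjJ (by rw [hz, if_neg hjA])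
  · rw [mem_powersetCard] at hJ
    exact (prod_eq_one fun j hj => by rw [hz, if_pos (hJ.1 hj)]).symm

lemma sum_pi_fin_two_prod {R : Type*} [CommSemiring R] (J : Finset ι) (h : ι → Fin 2 → R) :
    ∑ ε : ι → Fin 2, ∏ j ∈ J, h j (ε j) =
      2 ^ (Fintype.card ι - #J) * ∏ j ∈ J, (h j 0 + h j 1) := by
  have hj : ∀ j, ∑ b : Fin 2, (if j ∈ J then h j b else 1) =
      if j ∈ J then h j 0 + h j 1 else 2 := by
    intro j
    split_ifs <;> simp [Fin.sum_univ_two]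
  have hε : ∀ ε : ι → Fin 2, ∏ j ∈ J, h j (ε j) = ∏ j, if j ∈ J then h j (ε j) else 1 :=
    fun ε => (Fintype.prod_ite_mem J _).symm
  rw [Fintype.sum_congr _ _ hε,
    ← Fintype.prod_sum (fun j (b : Fin 2) => if j ∈ J then h j b else 1)]
  simp only [hj, Finset.prod_ite, filter_mem_eq_inter, univ_inter, prod_const]
  rw [filter_not, filter_mem_eq_inter, univ_inter, card_sdiff_of_subset (subset_univ J), card_univ,
    mul_comm]

lemma sum_pi_fin_two_choose (X m : ℕ) (z : ι → Fin 2 → Fin 2) :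
    ∑ ε : ι → Fin 2, (X + ∑ j, (z j (ε j) : ℕ)).choose m =
      ∑ p ∈ antidiagonal m, X.choose p.1 * ∑ J ∈ powersetCard p.2 univ,
        2 ^ (Fintype.card ι - p.2) * ∏ j ∈ J, ((z j 0 : ℕ) + z j 1) := by
  simp_rw [Nat.add_choose_eq, choose_sum_eq_sum_powersetCard_prod, mul_sum]
  rw [sum_comm]
  refine sum_congr rfl fun p _ => ?_
  rw [sum_comm]
  refine sum_congr rfl fun J hJ => ?_
  rw [← mul_sum, sum_pi_fin_two_prod J (fun j b => (z j b : ℕ)), (mem_powersetCard.1 hJ).2]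

lemma even_sum_pi_fin_two_choose {m : ℕ} (hm : m < Fintype.card ι) (X : ℕ)
    (z : ι → Fin 2 → Fin 2) :
    Even (∑ ε : ι → Fin 2, (X + ∑ j, (z j (ε j) : ℕ)).choose m) := by
  rw [sum_pi_fin_two_choose, even_iff_two_dvd]
  refine dvd_sum fun p hp => dvd_mul_of_dvd_right (dvd_sum fun J _ => dvd_mul_of_dvd_left ?_ _) _
  have := mem_antidiagonal.1 hp
  exact dvd_pow_self 2 (by omega)

lemma sum_pi_fin_two_choose_card_mod_two (X : ℕ) (z : ι → Fin 2 → Fin 2) :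
    (∑ ε : ι → Fin 2, (X + ∑ j, (z j (ε j) : ℕ)).choose (Fintype.card ι)) % 2 =
      (∏ j, ((z j 0 : ℕ) + z j 1)) % 2 := by
  rw [sum_pi_fin_two_choose, Nat.sum_antidiagonal_eq_sum_range_succ_mk, sum_range_succ']
  -- only the term `p = (0, |ι|)` has no factor `2`
  obtain ⟨e, he⟩ : 2 ∣ ∑ i ∈ range (Fintype.card ι), X.choose (i + 1) *
      ∑ J ∈ powersetCard (Fintype.card ι - (i + 1)) univ,
        2 ^ (Fintype.card ι - (Fintype.card ι - (i + 1))) * ∏ j ∈ J, ((z j 0 : ℕ) + z j 1) := by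
    refine dvd_sum fun i hi => dvd_mul_of_dvd_right (dvd_sum fun J _ => dvd_mul_of_dvd_left ?_ _) _
    have := mem_range.1 hi
    exact dvd_pow_self 2 (by omega)
  have huniv : powersetCard (Fintype.card ι) (univ : Finset ι) = {univ} := by
    rw [← card_univ, powersetCard_self]
  simp only [he, Nat.choose_zero_right, Nat.sub_zero, huniv, Nat.sub_self, pow_zero, one_mul,
    sum_singleton]
  omega

lemma neg_one_pow_sum_pi_fin_two_choose_card (X : ℕ) (z : ι → Fin 2 → Fin 2) :
    (-1 : ℝ) ^ (∑ ε : ι → Fin 2, (X + ∑ j, (z j (ε j) : ℕ)).choose (Fintype.card ι)) =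
      if ∀ j, z j 0 ≠ z j 1 then -1 else 1 := by
  have hz : ∀ j, ((z j 0 : ℕ) + z j 1) % 2 = if z j 0 ≠ z j 1 then 1 else 0 := by
    intro j
    split_ifs <;> fin_omega
  rw [neg_one_pow_eq_pow_mod_two, sum_pi_fin_two_choose_card_mod_two, prod_nat_mod,
    Fintype.prod_congr _ _ hz, prod_boole]
  simp only [mem_univ, forall_const]
  split_ifs <;> norm_num

end Cube

lemma neg_one_pow_card_filter_odd {α : Type*} (s : Finset α) (a : α → ℕ) :
    (-1 : ℝ) ^ #{i ∈ s | Odd (a i)} = (-1) ^ (∑ i ∈ s, a i) := by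
  rw [← prod_const, prod_filter, ← prod_pow_eq_pow_sum]
  refine prod_congr rfl fun i _ => ?_
  split_ifs with h
  · exact h.neg_one_pow.symm
  · exact (Nat.not_odd_iff_even.1 h).neg_one_pow.symm

section Counting

variable {σ β : Type*} [Fintype σ] [DecidableEq σ] [Fintype β] [DecidableEq β]

lemma card_filter_apply_eq_apply_le {a b : σ} (hab : a ≠ b) :
    #{f : σ → β | f a = f b} ≤ Fintype.card β ^ (Fintype.card σ - 1) := by
  have hinj : Set.InjOn (fun (f : σ → β) (c : {c // c ≠ a}) => f c)
      ({f | f a = f b} : Finset (σ → β)) := by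
    intro f hf g hg hfg
    funext c
    by_cases hc : c = a
    · subst hc
      rw [mem_coe, mem_filter] at hf hg
      rw [hf.2, hg.2]
      exact congrFun hfg ⟨b, hab.symm⟩
    · exact congrFun hfg ⟨c, hc⟩
  refine (card_le_card_of_injOn _ (fun f _ => mem_univ _) hinj).trans_eq ?_
  simp [Fintype.card_subtype_compl]

lemma card_filter_not_injective_le :
    #{f : σ → β | ¬ Function.Injective f} ≤
      Fintype.card σ ^ 2 * Fintype.card β ^ (Fintype.card σ - 1) := by
  have hsub : ({f | ¬ Function.Injective f} : Finset (σ → β)) ⊆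
      (univ : Finset σ).offDiag.biUnion fun p => {f : σ → β | f p.1 = f p.2} := by
    intro f hf
    simp only [Function.Injective, not_forall, mem_filter, mem_univ, true_and] at hf
    obtain ⟨a, b, hab, hne⟩ := hf
    exact mem_biUnion.2 ⟨(a, b), by simpa using hne, by simpa using hab⟩
  calc _ ≤ _ := card_le_card hsub
    _ ≤ ∑ p ∈ (univ : Finset σ).offDiag, #{f : σ → β | f p.1 = f p.2} := card_biUnion_le
    _ ≤ ∑ _p ∈ (univ : Finset σ).offDiag, Fintype.card β ^ (Fintype.card σ - 1) :=
      sum_le_sum fun p hp => card_filter_apply_eq_apply_le (mem_offDiag.1 hp).2.2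
    _ ≤ _ := by
      rw [sum_const, smul_eq_mul, offDiag_card, card_univ, sq]
      exact Nat.mul_le_mul_right _ (Nat.sub_le _ _)

lemma abs_sum_sub_sum_le_of_eq_of_injective (u v : (σ → β) → ℝ) (hu : ∀ f, |u f| ≤ 1)
    (hv : ∀ f, |v f| ≤ 1) (huv : ∀ f, Function.Injective f → u f = v f) :
    |∑ f, u f - ∑ f, v f| ≤
      2 * (Fintype.card σ ^ 2 * Fintype.card β ^ (Fintype.card σ - 1) : ℕ) := by
  rw [← sum_sub_distrib, ← sum_filter_not_add_sum_filter _ Function.Injective,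
    sum_eq_zero (fun f hf => sub_eq_zero.2 (huv f (mem_filter.1 hf).2)), add_zero]
  calc _ ≤ ∑ f ∈ {f : σ → β | ¬ Function.Injective f}, |u f - v f| := abs_sum_le_sum_abs _ _
    _ ≤ ∑ f ∈ {f : σ → β | ¬ Function.Injective f}, (2 : ℝ) :=
      sum_le_sum fun f _ => (abs_sub _ _).trans (by linarith [hu f, hv f])
    _ ≤ _ := by
      rw [sum_const, nsmul_eq_mul, mul_comm]
      gcongr
      exact_mod_cast card_filter_not_injective_le

/-- Every pattern `Y` is hit by at least `F ^ |σ|` maps `ρ ∘ y`; the surplus hits number exactly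
the right-hand side. -/
lemma abs_sum_comp_sub_le {α : Type*} [Fintype α] (ρ : α → β) {F : ℕ}
    (hF : ∀ b, F ≤ #{a | ρ a = b}) (f : (σ → β) → ℝ) (hf : ∀ Y, |f Y| ≤ 1) :
    |∑ y : σ → α, f (fun s => ρ (y s)) - F ^ Fintype.card σ * ∑ Y, f Y| ≤
      (Fintype.card α : ℝ) ^ Fintype.card σ - (Fintype.card β * F) ^ Fintype.card σ := by
  set N : (σ → β) → ℕ := fun Y => #{y : σ → α | (fun s => ρ (y s)) = Y}
  have hN : ∀ Y, (F : ℝ) ^ Fintype.card σ ≤ N Y := by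
    intro Y
    have : ({y | (fun s => ρ (y s)) = Y} : Finset (σ → α)) =
        Fintype.piFinset fun s => {a | ρ a = Y s} := by
      ext y
      simp [funext_iff]
    simp only [N, this, Fintype.card_piFinset]
    exact_mod_cast pow_card_le_prod _ _ _ fun s _ => hF (Y s)
  have hsumN : ∑ Y, (N Y : ℝ) = (Fintype.card α : ℝ) ^ Fintype.card σ := by
    rw [← Nat.cast_sum, ← card_eq_sum_card_fiberwise fun y _ => mem_univ fun s => ρ (y s),
      card_univ, Fintype.card_fun, Nat.cast_pow]
  have hsum : ∑ y : σ → α, f (fun s => ρ (y s)) = ∑ Y, (N Y : ℝ) * f Y := by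
    rw [← sum_fiberwise' univ (fun (y : σ → α) s => ρ (y s)) f]
    simp [N, sum_const, nsmul_eq_mul]
  rw [hsum, mul_sum, ← sum_sub_distrib]
  calc _ ≤ ∑ Y, |(N Y : ℝ) * f Y - F ^ Fintype.card σ * f Y| := abs_sum_le_sum_abs _ _
    _ ≤ ∑ Y, ((N Y : ℝ) - F ^ Fintype.card σ) := by
      refine sum_le_sum fun Y _ => ?_
      rw [← sub_mul, abs_mul, abs_of_nonneg (sub_nonneg.2 (hN Y))]
      exact mul_le_of_le_one_right (sub_nonneg.2 (hN Y)) (hf Y)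
    _ = _ := by
      rw [sum_sub_distrib, hsumN, sum_const, card_univ, Fintype.card_fun, nsmul_eq_mul, mul_pow]
      push_cast
      ring

end Counting

lemma div_le_card_filter_mod_eq (n : ℕ) {q r : ℕ} (hr : r < q) :
    n / q ≤ #{a : Fin n | (a : ℕ) % q = r} := by
  have hmap : ({a : Fin n | (a : ℕ) % q = r} : Finset (Fin n)).map Fin.valEmbedding =
      {x ∈ range n | x ≡ r [MOD q]} := by
    ext x
    simp only [Finset.mem_map, mem_filter, mem_univ, true_and, Fin.valEmbedding_apply, mem_range,
      Nat.ModEq, Nat.mod_eq_of_lt hr]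
    exact ⟨by rintro ⟨a, ha, rfl⟩; exact ⟨a.isLt, ha⟩, fun h => ⟨⟨x, h.1⟩, h.2, rfl⟩⟩
  rw [← card_map, hmap, ← Nat.count_eq_card_filter_range, Nat.count_modEq_card _ (by omega)]
  exact Nat.le_add_right _ _

lemma abs_sub_mul_le_two_mul_sub {a p q s : ℝ} (hqp : q ≤ p) (hs : |s| ≤ 1)
    (h : |a - q * s| ≤ p - q) : |a - p * s| ≤ 2 * (p - q) := by
  calc |a - p * s| = |(a - q * s) - (p - q) * s| := by ring_nf
    _ ≤ |a - q * s| + |(p - q) * s| := abs_sub _ _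
    _ = |a - q * s| + (p - q) * |s| := by rw [abs_mul, abs_of_nonneg (sub_nonneg.2 hqp)]
    _ ≤ (p - q) + (p - q) * 1 := by gcongr
    _ = 2 * (p - q) := by ring

lemma pow_sub_pow_le_of_le_add {a b d : ℝ} (hb : 0 ≤ b) (hba : b ≤ a) (had : a ≤ b + d)
    (m : ℕ) : a ^ m - b ^ m ≤ d * m * a ^ (m - 1) := by
  calc a ^ m - b ^ m ≤ |a ^ m - b ^ m| := le_abs_self _
    _ ≤ |a - b| * m * max |a| |b| ^ (m - 1) := abs_pow_sub_pow_le _ _ _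
    _ ≤ d * m * a ^ (m - 1) := by
      rw [abs_of_nonneg (sub_nonneg.2 hba), abs_of_nonneg (hb.trans hba), abs_of_nonneg hb,
        max_eq_left hba]
      have := pow_nonneg (hb.trans hba) (m - 1)
      gcongr
      linarith

lemma one_sub_two_div_two_pow_nonneg {L : ℕ} (hL : 0 < L) : 0 ≤ 1 - 2 / (2 : ℝ) ^ L :=
  sub_nonneg.2 ((div_le_one (by positivity)).2 (le_self_pow₀ one_le_two hL.ne'))

/-- The last `t` binary digits of `v`. -/
def digits (t v : ℕ) : Fin t → Fin 2 :=
  finFunctionFinEquiv.symm ⟨v % 2 ^ t, Nat.mod_lt _ (by positivity)⟩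

lemma div_two_pow_le_card_filter_digits_eq (n t : ℕ) (β : Fin t → Fin 2) :
    n / 2 ^ t ≤ #{a : Fin n | digits t a = β} := by
  simp_rw [digits, Equiv.symm_apply_eq, Fin.ext_iff]
  exact div_le_card_filter_mod_eq n (finFunctionFinEquiv β).isLt

/-- Any `t → ∞` with `4 ^ t ≤ n` would do. -/
def numDigits (n : ℕ) : ℕ := Nat.log 2 n / 2

lemma tendsto_numDigits : Tendsto numDigits atTop atTop := by
  refine tendsto_atTop_atTop.2 fun b => ⟨2 ^ (2 * b), fun n hn => ?_⟩
  have hn0 : n ≠ 0 := Nat.one_le_iff_ne_zero.1 (Nat.one_le_two_pow.trans hn)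
  have := (Nat.le_log_iff_pow_le one_lt_two hn0).2 hn
  unfold numDigits
  omega

lemma two_pow_numDigits_div_le {n : ℕ} (hn : 0 < n) :
    (2 : ℝ) ^ numDigits n / n ≤ (1 / 2) ^ numDigits n := by
  have h : 2 ^ numDigits n * 2 ^ numDigits n ≤ n := by
    rw [← pow_add]
    exact (Nat.pow_le_pow_right two_pos (by unfold numDigits; omega)).trans
      (Nat.pow_log_le_self 2 hn.ne')
  rw [div_le_iff₀ (by positivity), one_div_pow, div_mul_eq_mul_div, one_mul,
    le_div_iff₀ (by positivity)]
  exact_mod_cast h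

/-- The number of pairs `(i, S)` with `i < t` and `S` an `m`-subset of `e` all of whose vertices
have `i`-th digit `1`. -/
def digitCliqueCount (t m : ℕ) {n : ℕ} (e : Finset (Fin n)) : ℕ :=
  ∑ i : Fin t, (∑ v ∈ e, (digits t v i : ℕ)).choose m

def parityHSeq (k m : ℕ) : HSeq := fun n =>
  {e ∈ powersetCard k univ | Odd (digitCliqueCount (numDigits n) m e)}

lemma uniformSeq_parityHSeq (k m : ℕ) : UniformSeq k (parityHSeq k m) :=
  fun _ _ he => (mem_powersetCard.1 (mem_filter.1 he).1).2

def digitSign {t L : ℕ} (Y : Fin L × Fin 2 → Fin t → Fin 2) : ℝ :=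
  ∏ i, if ∀ j, Y (j, 0) i ≠ Y (j, 1) i then -1 else 1

lemma abs_digitSign_le_one {t L : ℕ} (Y : Fin L × Fin 2 → Fin t → Fin 2) :
    |digitSign Y| ≤ 1 := by
  rw [digitSign, abs_prod]
  exact prod_le_one (fun _ _ => abs_nonneg _) fun i _ => by split_ifs <;> simp

lemma card_filter_forall_ne (L : ℕ) :
    #{w : Fin L × Fin 2 → Fin 2 | ∀ j, w (j, 0) ≠ w (j, 1)} = 2 ^ L := by
  let e : (Fin L × Fin 2 → Fin 2) ≃ (Fin L → Fin 2 × Fin 2) :=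
    (Equiv.curry _ _ _).trans (Equiv.piCongrRight fun _ => finTwoArrowEquiv _)
  rw [card_equiv e (t := Fintype.piFinset fun _ => {p : Fin 2 × Fin 2 | p.1 ≠ p.2}) fun w => by
      simp [e, Fintype.mem_piFinset],
    Fintype.card_piFinset, prod_const, card_univ, Fintype.card_fin]
  rfl

/-- The digits are independent coordinates, so the sum factors over them. -/
lemma sum_digitSign (t L : ℕ) :
    ∑ Y : Fin L × Fin 2 → Fin t → Fin 2, digitSign Y =
      ((2 : ℝ) ^ t) ^ (2 * L) * (1 - 2 / 2 ^ L) ^ t := by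
  set r : ℝ := 1 - 2 / 2 ^ L
  set s : (Fin L × Fin 2 → Fin 2) → ℝ := fun w => if ∀ j, w (j, 0) ≠ w (j, 1) then -1 else 1
  have hs : ∑ w, s w = ((2 : ℝ) ^ L) ^ 2 * r := by
    have hs' : ∀ w, s w = 1 - 2 * if ∀ j, w (j, 0) ≠ w (j, 1) then 1 else 0 := fun w => by
      simp only [s]
      split_ifs <;> norm_num
    simp only [hs', sum_sub_distrib, ← mul_sum, sum_boole, card_filter_forall_ne, sum_const,
      card_univ, Fintype.card_fun, Fintype.card_prod, Fintype.card_fin, nsmul_eq_mul, r]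
    field_simp
    push_cast
    ring
  calc ∑ Y : Fin L × Fin 2 → Fin t → Fin 2, digitSign Y
      = ∑ Z : Fin t → Fin L × Fin 2 → Fin 2, ∏ i, s (Z i) :=
        Fintype.sum_equiv (Equiv.piComm _) _ _ fun _ => rfl
    _ = _ := by
      rw [← Fintype.prod_sum, hs, prod_const, card_univ, Fintype.card_fin, mul_pow, ← pow_mul,
        ← pow_mul]
      ring

lemma abs_sum_digitSign_div_sub_le {n : ℕ} (hn : 0 < n) (t : ℕ) {L : ℕ} (hL : 0 < L) :
    |(∑ y : Fin L × Fin 2 → Fin n, digitSign fun s => digits t (y s)) / n ^ (2 * L) -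
      (1 - 2 / 2 ^ L) ^ t| ≤ 4 * L * 2 ^ t / n := by
  set r : ℝ := 1 - 2 / 2 ^ L
  set u : ℝ := 2 ^ t * (n / 2 ^ t : ℕ)
  have htransfer : |(∑ y : Fin L × Fin 2 → Fin n, digitSign fun s => digits t (y s)) -
      u ^ (2 * L) * r ^ t| ≤ n ^ (2 * L) - u ^ (2 * L) := by
    convert abs_sum_comp_sub_le (fun a : Fin n => digits t a)
      (div_two_pow_le_card_filter_digits_eq n t) (σ := Fin L × Fin 2) digitSign
      abs_digitSign_le_one using 2 <;>
    simp only [sum_digitSign, Fintype.card_prod, Fintype.card_fin, Fintype.card_fun, u] <;>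
    push_cast <;> ring
  have hu : 0 ≤ u ∧ u ≤ n ∧ (n : ℝ) ≤ u + 2 ^ t := by
    have h1 : (n : ℝ) < (n / 2 ^ t : ℕ) * 2 ^ t + 2 ^ t := by
      exact_mod_cast Nat.lt_div_mul_add (Nat.two_pow_pos t)
    have h2 : ((n / 2 ^ t : ℕ) * 2 ^ t : ℝ) ≤ n := by exact_mod_cast Nat.div_mul_le_self n (2 ^ t)
    exact ⟨by positivity, by linarith, by linarith⟩
  have hr : |r ^ t| ≤ 1 := by
    rw [abs_pow, abs_of_nonneg (one_sub_two_div_two_pow_nonneg hL)]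
    exact pow_le_one₀ (one_sub_two_div_two_pow_nonneg hL) (sub_le_self _ (by positivity))
  have key := abs_sub_mul_le_two_mul_sub (pow_le_pow_left₀ hu.1 hu.2.1 _) hr htransfer
  have hpow := pow_sub_pow_le_of_le_add hu.1 hu.2.1 hu.2.2 (2 * L)
  have hP : (0 : ℝ) < n ^ (2 * L) := by positivity
  rw [div_sub' hP.ne', abs_div, abs_of_pos hP, div_le_div_iff₀ hP (by positivity)]
  calc _ ≤ 2 * (2 ^ t * (2 * L : ℕ) * n ^ (2 * L - 1)) * (n : ℝ) := by gcongr; linarith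
    _ = 4 * L * 2 ^ t * (n ^ (2 * L - 1) * n) := by push_cast; ring
    _ = _ := by rw [pow_sub_one_mul (by omega)]

section Octahedron

variable {n k L : ℕ} {x : Fin (k - L) → Fin n} {y : Fin L × Fin 2 → Fin n}

lemma image_octTuple (hLk : L ≤ k) (ε : Fin L → Fin 2) :
    univ.image (octTuple k L x y ε) = univ.image x ∪ univ.image fun j => y (j, ε j) := by
  ext v
  simp only [mem_image, mem_union, mem_univ, true_and]
  constructor
  · rintro ⟨r, rfl⟩
    unfold octTuple
    split_ifs
    exacts [Or.inl ⟨_, rfl⟩, Or.inr ⟨_, rfl⟩]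
  · rintro (⟨a, rfl⟩ | ⟨j, rfl⟩)
    · exact ⟨⟨a, by omega⟩, by simp [octTuple]⟩
    · exact ⟨⟨k - L + j, by omega⟩, by simp [octTuple]⟩

section Injective

variable (hxy : Function.Injective (Sum.elim x y))
include hxy

lemma injective_section (ε : Fin L → Fin 2) : Function.Injective fun j => y (j, ε j) :=
  fun _ _ h => (Prod.mk.inj ((Sum.elim_injective.1 hxy).2.1 h)).1

lemma disjoint_image_octTuple (ε : Fin L → Fin 2) :
    Disjoint (univ.image x) (univ.image fun j => y (j, ε j)) := by
  simp only [disjoint_left, mem_image, mem_univ, true_and, not_exists]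
  rintro _ ⟨a, rfl⟩ j
  exact ((Sum.elim_injective.1 hxy).2.2 a _).symm

lemma card_image_octTuple (hLk : L ≤ k) (ε : Fin L → Fin 2) :
    #(univ.image (octTuple k L x y ε)) = k := by
  rw [image_octTuple hLk, card_union_of_disjoint (disjoint_image_octTuple hxy ε),
    card_image_of_injective _ (Sum.elim_injective.1 hxy).1,
    card_image_of_injective _ (injective_section hxy ε)]
  simp only [card_univ, Fintype.card_fin]
  omega

lemma injective_image_octTuple (hLk : L ≤ k) :
    Function.Injective fun ε : Fin L → Fin 2 => univ.image (octTuple k L x y ε) := by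
  intro ε ε' (h : univ.image (octTuple k L x y ε) = univ.image (octTuple k L x y ε'))
  funext j
  have hj : y (j, ε j) ∈ univ.image (octTuple k L x y ε') := by
    rw [← h, image_octTuple hLk]
    exact mem_union_right _ (mem_image_of_mem _ (mem_univ j))
  rw [image_octTuple hLk, mem_union, mem_image, mem_image] at hj
  rcases hj with ⟨a, -, ha⟩ | ⟨j', -, hj'⟩
  · exact absurd ha ((Sum.elim_injective.1 hxy).2.2 a _)
  · obtain ⟨rfl, h⟩ := Prod.mk.inj ((Sum.elim_injective.1 hxy).2.1 hj')
    exact h.symm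

lemma card_octSet_inter (hLk : L ≤ k) (H : Finset (Finset (Fin n))) :
    #(octSet k L x y ∩ H) = #{ε : Fin L → Fin 2 | univ.image (octTuple k L x y ε) ∈ H} := by
  have hoct : octSet k L x y = univ.image fun ε => univ.image (octTuple k L x y ε) :=
    filter_true_of_mem fun T hT => by
      obtain ⟨ε, -, rfl⟩ := mem_image.1 hT
      exact card_image_octTuple hxy hLk ε
  rw [hoct, ← filter_mem_eq_inter, filter_image,
    card_image_of_injective _ (injective_image_octTuple hxy hLk)]

lemma sum_image_octTuple (hLk : L ≤ k) (ε : Fin L → Fin 2) (g : Fin n → ℕ) :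
    ∑ v ∈ univ.image (octTuple k L x y ε), g v = ∑ a, g (x a) + ∑ j, g (y (j, ε j)) := by
  rw [image_octTuple hLk, sum_union (disjoint_image_octTuple hxy ε),
    sum_image fun _ _ _ _ h => (Sum.elim_injective.1 hxy).1 h,
    sum_image fun _ _ _ _ h => injective_section hxy ε h]

lemma neg_one_pow_card_octSet_inter_parityHSeq {m : ℕ} (hLk : L ≤ k) :
    (-1 : ℝ) ^ #(octSet k L x y ∩ parityHSeq k m n) =
      ∏ i, (-1) ^ ∑ ε : Fin L → Fin 2, (∑ a, (digits (numDigits n) (x a) i : ℕ) +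
        ∑ j, (digits (numDigits n) (y (j, ε j)) i : ℕ)).choose m := by
  have hmem : ∀ ε, univ.image (octTuple k L x y ε) ∈ parityHSeq k m n ↔
      Odd (digitCliqueCount (numDigits n) m (univ.image (octTuple k L x y ε))) := fun ε => by
    simp [parityHSeq, mem_powersetCard, card_image_octTuple hxy hLk ε]
  simp_rw [card_octSet_inter hxy hLk, hmem, neg_one_pow_card_filter_odd, digitCliqueCount,
    sum_image_octTuple hxy hLk]
  rw [sum_comm, prod_pow_eq_pow_sum]

lemma neg_one_pow_card_octSet_inter_parityHSeq_of_lt {m : ℕ} (hLk : L ≤ k) (hmL : m < L) :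
    (-1 : ℝ) ^ #(octSet k L x y ∩ parityHSeq k m n) = 1 := by
  rw [neg_one_pow_card_octSet_inter_parityHSeq hxy hLk]
  refine prod_eq_one fun i _ => Even.neg_one_pow ?_
  exact even_sum_pi_fin_two_choose (by simpa using hmL) _ fun j b => digits _ (y (j, b)) i

lemma neg_one_pow_card_octSet_inter_parityHSeq_self (hLk : L ≤ k) :
    (-1 : ℝ) ^ #(octSet k L x y ∩ parityHSeq k L n) =
      digitSign fun s => digits (numDigits n) (y s) := by
  rw [neg_one_pow_card_octSet_inter_parityHSeq hxy hLk, digitSign]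
  refine prod_congr rfl fun i _ => ?_
  have := neg_one_pow_sum_pi_fin_two_choose_card (∑ a, (digits (numDigits n) (x a) i : ℕ))
    fun j b => digits (numDigits n) (y (j, b)) i
  rw [Fintype.card_fin] at this
  convert this using 2

end Injective

end Octahedron

lemma abs_devSum_sub_le {n k L : ℕ} (hLk : L ≤ k) (H : Finset (Finset (Fin n)))
    (g : (Fin L × Fin 2 → Fin n) → ℝ) (hg : ∀ y, |g y| ≤ 1)
    (hH : ∀ x y, Function.Injective (Sum.elim x y) → (-1 : ℝ) ^ #(octSet k L x y ∩ H) = g y) :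
    |devSum k L H - n ^ (k - L) * ∑ y, g y| ≤ 2 * ((k + L) ^ 2 * n ^ (k + L - 1) : ℕ) := by
  have hsum : ∀ G : (Fin (k - L) → Fin n) → (Fin L × Fin 2 → Fin n) → ℝ,
      ∑ x, ∑ y, G x y = ∑ f : Fin (k - L) ⊕ Fin L × Fin 2 → Fin n, G (f ∘ Sum.inl) (f ∘ Sum.inr) :=
    fun G => by
      rw [← Fintype.sum_prod_type']
      exact (Fintype.sum_equiv (Equiv.sumArrowEquivProdArrow _ _ _) _ _ fun _ => rfl).symm
  have hcard : Fintype.card (Fin (k - L) ⊕ Fin L × Fin 2) = k + L := by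
    simp only [Fintype.card_sum, Fintype.card_prod, Fintype.card_fin]
    omega
  have hconst : (n : ℝ) ^ (k - L) * ∑ y, g y = ∑ _x : Fin (k - L) → Fin n, ∑ y, g y := by
    simp [sum_const, card_univ]
  rw [devSum, hconst, hsum, hsum]
  refine (abs_sum_sub_sum_le_of_eq_of_injective _ _ (fun f => ?_) (fun f => hg _)
    fun f hf => ?_).trans_eq ?_
  · rw [abs_pow, abs_neg, abs_one, one_pow]
  · exact hH _ _ (by rwa [Sum.elim_comp_inl_inr])
  · rw [hcard, Fintype.card_fin]

lemma abs_devSum_div_sub_le {n k L : ℕ} (hn : 0 < n) (hL : 0 < L) (hLk : L ≤ k)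
    (H : Finset (Finset (Fin n))) (g : (Fin L × Fin 2 → Fin n) → ℝ) (hg : ∀ y, |g y| ≤ 1)
    (hH : ∀ x y, Function.Injective (Sum.elim x y) → (-1 : ℝ) ^ #(octSet k L x y ∩ H) = g y) :
    |devSum k L H / n ^ (k + L) - (∑ y, g y) / n ^ (2 * L)| ≤
      2 * ((k + L : ℕ) : ℝ) ^ 2 / n := by
  have hP : (0 : ℝ) < n ^ (k + L) := by positivity
  have hsplit : (n : ℝ) ^ (k + L) = n ^ (k - L) * n ^ (2 * L) := by
    rw [← pow_add]
    congr 1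
    omega
  have := abs_devSum_sub_le hLk H g hg hH
  rw [Nat.cast_mul, Nat.cast_pow, Nat.cast_pow] at this
  rw [show devSum k L H / n ^ (k + L) - (∑ y, g y) / n ^ (2 * L) =
      (devSum k L H - n ^ (k - L) * ∑ y, g y) / n ^ (k + L) by rw [hsplit]; field_simp,
    abs_div, abs_of_pos hP, div_le_div_iff₀ hP (by positivity)]
  calc _ ≤ 2 * (((k + L : ℕ) : ℝ) ^ 2 * n ^ (k + L - 1)) * n := by gcongr
    _ = 2 * ((k + L : ℕ) : ℝ) ^ 2 * (n ^ (k + L - 1) * n) := by ring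
    _ = _ := by rw [pow_sub_one_mul (by omega)]

lemma dev_iff_tendsto {k L : ℕ} {H : HSeq} :
    Dev k L H ↔ Tendsto (fun n => devSum k L (H n) / (n : ℝ) ^ (k + L)) atTop (nhds 0) :=
  isLittleO_iff_tendsto' ((eventually_gt_atTop 0).mono fun _ hn h =>
    absurd h (pow_ne_zero _ (Nat.cast_ne_zero.2 hn.ne')))

lemma tendsto_devSum_div_parityHSeq_succ {k m : ℕ} (hmk : m + 1 ≤ k) :
    Tendsto (fun n => devSum k (m + 1) (parityHSeq k m n) / (n : ℝ) ^ (k + (m + 1))) atTop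
      (nhds 1) := by
  have hbound : ∀ n : ℕ, 0 < n →
      ‖devSum k (m + 1) (parityHSeq k m n) / (n : ℝ) ^ (k + (m + 1)) - 1‖ ≤
        2 * ((k + (m + 1) : ℕ) : ℝ) ^ 2 / n := fun n hn => by
    have := abs_devSum_div_sub_le hn m.succ_pos hmk (parityHSeq k m n) (fun _ => 1) (by simp)
      fun x y hxy => neg_one_pow_card_octSet_inter_parityHSeq_of_lt hxy hmk m.lt_succ_self
    simp only [sum_const, card_univ, Fintype.card_fun, Fintype.card_prod, Fintype.card_fin,
      nsmul_eq_mul, mul_one] at this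
    rwa [mul_comm (m + 1) 2, Nat.cast_pow, div_self (by positivity), ← Real.norm_eq_abs] at this
  rw [tendsto_iff_norm_sub_tendsto_zero]
  refine squeeze_zero' (.of_forall fun n => norm_nonneg _) ((eventually_gt_atTop 0).mono hbound) ?_
  exact tendsto_const_div_atTop_nhds_zero_nat _

lemma abs_devSum_div_parityHSeq_self_le {n k L : ℕ} (hn : 0 < n) (hL : 0 < L) (hLk : L ≤ k) :
    |devSum k L (parityHSeq k L n) / (n : ℝ) ^ (k + L)| ≤ 2 * ((k + L : ℕ) : ℝ) ^ 2 / n +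
      4 * L * (1 / 2) ^ numDigits n + (1 - 2 / 2 ^ L) ^ numDigits n := by
  set R := devSum k L (parityHSeq k L n) / (n : ℝ) ^ (k + L)
  set S := (∑ y : Fin L × Fin 2 → Fin n, digitSign fun s => digits (numDigits n) (y s)) /
    (n : ℝ) ^ (2 * L)
  set ρ : ℝ := (1 - 2 / 2 ^ L) ^ numDigits n
  have hdev : |R - S| ≤ 2 * ((k + L : ℕ) : ℝ) ^ 2 / n :=
    abs_devSum_div_sub_le hn hL hLk (parityHSeq k L n) _ (fun _ => abs_digitSign_le_one _)
      fun x y hxy => neg_one_pow_card_octSet_inter_parityHSeq_self hxy hLk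
  have hsign : |S - ρ| ≤ 4 * L * (1 / 2) ^ numDigits n :=
    (abs_sum_digitSign_div_sub_le hn (numDigits n) hL).trans <| by
      rw [mul_div_assoc]
      exact mul_le_mul_of_nonneg_left (two_pow_numDigits_div_le hn) (by positivity)
  calc |R| = |(R - S) + (S - ρ) + ρ| := by ring_nf
    _ ≤ |R - S| + |S - ρ| + |ρ| := abs_add_three _ _ _
    _ ≤ _ := by
      rw [abs_of_nonneg (pow_nonneg (one_sub_two_div_two_pow_nonneg hL) _)]
      gcongr

lemma tendsto_devSum_div_parityHSeq_self {k L : ℕ} (hL : 0 < L) (hLk : L ≤ k) :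
    Tendsto (fun n => devSum k L (parityHSeq k L n) / (n : ℝ) ^ (k + L)) atTop (nhds 0) := by
  refine squeeze_zero_norm' ((eventually_gt_atTop 0).mono fun n hn =>
    abs_devSum_div_parityHSeq_self_le hn hL hLk) ?_
  have h1 := tendsto_const_div_atTop_nhds_zero_nat (2 * ((k + L : ℕ) : ℝ) ^ 2)
  have h2 := ((tendsto_pow_atTop_nhds_zero_of_lt_one (by norm_num : (0 : ℝ) ≤ 1 / 2)
    (by norm_num)).comp tendsto_numDigits).const_mul (4 * L : ℝ)
  have h3 := (tendsto_pow_atTop_nhds_zero_of_lt_one (one_sub_two_div_two_pow_nonneg hL)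
    (sub_lt_self _ (by positivity))).comp tendsto_numDigits
  simpa using (h1.add h2).add h3

end DevCounterexample

theorem dev_not_implies_dev_succ_general (k ℓ : ℕ) (hℓ2 : 2 ≤ ℓ) (hℓk : ℓ ≤ k - 1) :
    ∃ H : HSeq, UniformSeq k H ∧ Dev k ℓ H ∧ ¬ Dev k (ℓ + 1) H := by
  open DevCounterexample in
  refine ⟨parityHSeq k ℓ, uniformSeq_parityHSeq k ℓ,
    dev_iff_tendsto.2 (tendsto_devSum_div_parityHSeq_self (by omega) (by omega)), fun h => ?_⟩
  exact one_ne_zero (tendsto_nhds_unique (tendsto_devSum_div_parityHSeq_succ (by omega))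
    (dev_iff_tendsto.1 h))

/-- `Dev(ℓ)` does not imply `Dev(ℓ+1)` for `2 ≤ ℓ ≤ k-1`. -/
theorem dev_not_implies_dev_succ (k ℓ : ℕ) (hk : 3 ≤ k) (hℓ2 : 2 ≤ ℓ) (hℓk : ℓ ≤ k - 1) :
    ∃ H : HSeq, UniformSeq k H ∧ Dev k ℓ H ∧ ¬ Dev k (ℓ + 1) H :=
  dev_not_implies_dev_succ_general k ℓ hℓ2 hℓk
end

section
/- Let k ≥ 2, let 0 < p < 1, and let π be a proper partition of k. Every hypergraph sequence satisfying PartiteExpand_p(π) also satisfies Expand_p(π). -/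
/-! Color the vertices with the `t` part indices of `π` and keep in `S i` only the sets all of whose
vertices have color `i`. The restricted families have pairwise disjoint vertex sets, so
`PartiteExpand` applies to each of them. A tuple `(s_1, …, s_t)` with pairwise disjoint parts
survives under exactly `t ^ (n - k)` of the `t ^ n` colorings, and a tuple whose union is an edge
has disjoint parts because the edge has only `k = Σ |s_i|` vertices. Summing over all colorings
therefore gives `e(S_1, …, S_t) = p · #(disjoint tuples) + t ^ k · o(n ^ k)`. Finally, the tuples in
which two parts share a vertex `v` number at most `t ^ 2 · n · n ^ (k - 2)`, which is `o(n ^ k)`. -/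

open Filter Finset Asymptotics

open Function

namespace Finset

variable {α ι : Type*}

theorem card_le_pow_of_forall_card_eq [Fintype α] {S : Finset (Finset α)} {κ : ℕ}
    (hS : ∀ e ∈ S, #e = κ) : #S ≤ Fintype.card α ^ κ := by
  calc #S ≤ #(powersetCard κ (univ : Finset α)) :=
        card_le_card fun e he => mem_powersetCard.2 ⟨subset_univ e, hS e he⟩
    _ ≤ Fintype.card α ^ κ := by
        rw [card_powersetCard, card_univ]
        exact Nat.choose_le_pow _ _

theorem card_filter_mem_le_pow [Fintype α] [DecidableEq α] {S : Finset (Finset α)} {κ : ℕ}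
    (hS : ∀ e ∈ S, #e = κ) (v : α) : #{e ∈ S | v ∈ e} ≤ Fintype.card α ^ (κ - 1) := by
  have herase : ∀ e ∈ {e ∈ S | v ∈ e}, #(e.erase v) = κ - 1 := fun e he => by
    rw [mem_filter] at he
    rw [card_erase_of_mem he.2, hS e he.1]
  calc #{e ∈ S | v ∈ e} = #(image (·.erase v) {e ∈ S | v ∈ e}) :=
        (card_image_of_injOn fun e he e' he' => erase_injOn' v (mem_filter.1 he).2
          (mem_filter.1 he').2).symm
    _ ≤ Fintype.card α ^ (κ - 1) := card_le_pow_of_forall_card_eq <| by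
        simpa only [forall_mem_image] using herase

theorem pairwise_disjoint_of_card_biUnion [DecidableEq α] [Fintype ι] [DecidableEq ι]
    {s : ι → Finset α} (h : #(univ.biUnion s) = ∑ i, #(s i)) : Pairwise (Disjoint on s) := by
  intro i j hij
  rw [onFun, ← card_union_eq_card_add_card]
  set R := (univ.erase i).erase j
  have hjR : j ∈ univ.erase i := mem_erase.2 ⟨hij.symm, mem_univ j⟩
  have hunion : univ.biUnion s = (s i ∪ s j) ∪ R.biUnion s := by
    ext v
    simp only [mem_biUnion, mem_univ, true_and, mem_union, R, mem_erase]
    constructor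
    · rintro ⟨l, hl⟩
      by_cases hli : l = i
      · exact .inl (.inl (hli ▸ hl))
      by_cases hlj : l = j
      · exact .inl (.inr (hlj ▸ hl))
      exact .inr ⟨l, ⟨hlj, hli, trivial⟩, hl⟩
    · rintro ((hv | hv) | ⟨l, -, hv⟩) <;> exact ⟨_, hv⟩
  have hsum : ∑ l, #(s l) = #(s i) + (#(s j) + ∑ l ∈ R, #(s l)) := by
    rw [← add_sum_erase _ _ (mem_univ i), ← add_sum_erase _ _ hjR]
  have := card_union_le (s i ∪ s j) (R.biUnion s)
  have := card_union_le (s i) (s j)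
  have : #(R.biUnion s) ≤ ∑ l ∈ R, #(s l) := card_biUnion_le
  rw [hunion] at h
  omega

def restrictToColor [DecidableEq ι] (S : ι → Finset (Finset α)) (c : α → ι) (i : ι) :
    Finset (Finset α) :=
  {e ∈ S i | ∀ v ∈ e, c v = i}

theorem mem_restrictToColor [DecidableEq ι] {S : ι → Finset (Finset α)} {c : α → ι} {i : ι}
    {e : Finset α} : e ∈ restrictToColor S c i ↔ e ∈ S i ∧ ∀ v ∈ e, c v = i :=
  mem_filter

theorem pairwise_disjoint_restrictToColor [DecidableEq α] [DecidableEq ι]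
    (S : ι → Finset (Finset α)) (c : α → ι) :
    Pairwise (Disjoint on fun i => (restrictToColor S c i).biUnion id) := by
  intro i j hij
  simp only [onFun, disjoint_left, mem_biUnion, mem_restrictToColor, id]
  rintro v ⟨e, ⟨-, he⟩, hve⟩ ⟨e', ⟨-, he'⟩, hve'⟩
  exact hij ((he v hve).symm.trans (he' v hve'))

section Fintype

variable [Fintype α] [DecidableEq α] [Fintype ι] [DecidableEq ι]

theorem card_filter_not_disjoint_le (S : ι → Finset (Finset α)) {κ : ι → ℕ}
    (hκ : ∀ i, 0 < κ i) (hS : ∀ i, ∀ e ∈ S i, #e = κ i) {i j : ι} (hij : i ≠ j) :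
    #{s ∈ Fintype.piFinset S | ¬Disjoint (s i) (s j)} ≤
      Fintype.card α ^ (∑ l, κ l - 1) := by
  set n := Fintype.card α
  set m : ι → ℕ := fun l => κ l - if l = i ∨ l = j then 1 else 0
  set T : α → ι → Finset (Finset α) := fun v l =>
    if l = i ∨ l = j then {e ∈ S l | v ∈ e} else S l
  have hcover : {s ∈ Fintype.piFinset S | ¬Disjoint (s i) (s j)} ⊆
      univ.biUnion fun v => Fintype.piFinset (T v) := by
    intro s hs
    simp only [mem_filter, Fintype.mem_piFinset, not_disjoint_iff] at hs
    obtain ⟨hsS, v, hvi, hvj⟩ := hs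
    refine mem_biUnion.2 ⟨v, mem_univ v, Fintype.mem_piFinset.2 fun l => ?_⟩
    simp only [T]
    split_ifs with hl
    · rcases hl with rfl | rfl <;> simpa [hsS]
    · exact hsS l
  have hT : ∀ v, #(Fintype.piFinset (T v)) ≤ n ^ ∑ l, m l := fun v => by
    rw [Fintype.card_piFinset, ← prod_pow_eq_pow_sum]
    refine prod_le_prod' fun l _ => ?_
    simp only [T, m]
    split_ifs
    · exact card_filter_mem_le_pow (hS l) v
    · exact card_le_pow_of_forall_card_eq (hS l)
  have hm : ∑ l, m l + 2 = ∑ l, κ l := by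
    have hpair : ∑ l : ι, (if l = i ∨ l = j then 1 else 0) = 2 := by
      rw [sum_boole, Nat.cast_id, filter_or, filter_eq', filter_eq', if_pos (mem_univ _),
        if_pos (mem_univ _), card_union_of_disjoint (disjoint_singleton.2 hij)]
      rfl
    have hle : ∀ l ∈ univ, (if l = i ∨ l = j then 1 else 0) ≤ κ l := fun l _ => by
      have := hκ l
      split_ifs <;> omega
    have := sum_le_sum hle
    simp only [m]
    rw [sum_tsub_distrib _ hle]
    omega
  calc _ ≤ #(univ.biUnion fun v => Fintype.piFinset (T v)) := card_le_card hcover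
    _ ≤ ∑ v, #(Fintype.piFinset (T v)) := card_biUnion_le
    _ ≤ ∑ _v : α, n ^ ∑ l, m l := sum_le_sum fun v _ => hT v
    _ = n ^ (∑ l, m l + 1) := by rw [sum_const, card_univ, smul_eq_mul, pow_succ, mul_comm]
    _ ≤ n ^ (∑ l, κ l - 1) := by
        rcases Nat.eq_zero_or_pos n with hn | hn
        · rw [hn, zero_pow (Nat.succ_ne_zero _)]
          exact Nat.zero_le _
        · exact Nat.pow_le_pow_right hn (by omega)

open scoped Classical in
theorem card_filter_not_pairwise_disjoint_le (S : ι → Finset (Finset α)) {κ : ι → ℕ}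
    (hκ : ∀ i, 0 < κ i) (hS : ∀ i, ∀ e ∈ S i, #e = κ i) :
    #{s ∈ Fintype.piFinset S | ¬Pairwise (Disjoint on s)} ≤
      Fintype.card ι ^ 2 * Fintype.card α ^ (∑ l, κ l - 1) := by
  have hcover : {s ∈ Fintype.piFinset S | ¬Pairwise (Disjoint on s)} ⊆
      (univ : Finset ι).offDiag.biUnion fun q =>
        {s ∈ Fintype.piFinset S | ¬Disjoint (s q.1) (s q.2)} := by
    intro s hs
    simp only [mem_filter, Pairwise, onFun, not_forall] at hs
    obtain ⟨hsS, i, j, hij, hdisj⟩ := hs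
    exact mem_biUnion.2 ⟨(i, j), by simpa using hij, mem_filter.2 ⟨hsS, hdisj⟩⟩
  calc _ ≤ _ := card_le_card hcover
    _ ≤ ∑ q ∈ (univ : Finset ι).offDiag, Fintype.card α ^ (∑ l, κ l - 1) :=
        card_biUnion_le.trans <| sum_le_sum fun q hq =>
          card_filter_not_disjoint_le S hκ hS (mem_offDiag.1 hq).2.2
    _ ≤ Fintype.card ι ^ 2 * Fintype.card α ^ (∑ l, κ l - 1) := by
        rw [sum_const, smul_eq_mul, offDiag_card, card_univ, sq]
        exact Nat.mul_le_mul_right _ (Nat.sub_le _ _)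

def coloringsOf (s : ι → Finset α) : Finset (α → ι) :=
  {c | ∀ i, ∀ v ∈ s i, c v = i}

theorem coloringsOf_eq_piFinset (s : ι → Finset α) :
    coloringsOf s = Fintype.piFinset fun v => {i | ∀ j, v ∈ s j → j = i} := by
  ext c
  simp only [coloringsOf, mem_filter, mem_univ, true_and, Fintype.mem_piFinset]
  exact ⟨fun h v j hv => (h j v hv).symm, fun h i v hv => (h v i hv).symm⟩

theorem card_coloringsOf {s : ι → Finset α} (hs : Pairwise (Disjoint on s)) :
    #(coloringsOf s) = Fintype.card ι ^ (Fintype.card α - ∑ i, #(s i)) := by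
  have hcolors : ∀ v, #({i | ∀ j, v ∈ s j → j = i} : Finset ι) =
      if v ∈ univ.biUnion s then 1 else Fintype.card ι := by
    intro v
    split_ifs with hv
    · obtain ⟨j, -, hvj⟩ := mem_biUnion.1 hv
      rw [card_eq_one]
      refine ⟨j, ?_⟩
      ext i
      simp only [mem_filter, mem_univ, true_and, mem_singleton]
      refine ⟨fun h => (h j hvj).symm, ?_⟩
      rintro rfl l hvl
      by_contra hlj
      exact disjoint_left.1 (hs hlj) hvl hvj
    · simp only [mem_biUnion, mem_univ, true_and, not_exists] at hv
      simp [hv]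
  rw [coloringsOf_eq_piFinset, Fintype.card_piFinset, prod_congr rfl fun v _ => hcolors v,
    prod_ite, prod_const_one, one_mul, prod_const, filter_not, card_sdiff_of_subset
    (filter_subset _ _), filter_mem_eq_inter, univ_inter, card_univ,
    card_biUnion fun i _ j _ hij => hs hij]

theorem coloringsOf_eq_empty {s : ι → Finset α} (hs : ¬Pairwise (Disjoint on s)) :
    coloringsOf s = ∅ := by
  simp only [Pairwise, onFun, not_forall, not_disjoint_iff] at hs
  obtain ⟨i, j, hij, v, hvi, hvj⟩ := hs
  refine filter_false_of_mem fun c _ hc => hij ?_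
  rw [← hc i v hvi, hc j v hvj]

theorem sum_card_filter_mem_coloringsOf (X : Finset (ι → Finset α)) {m : ℕ}
    (hX : ∀ s ∈ X, Pairwise (Disjoint on s) ∧ ∑ i, #(s i) = m) :
    ∑ c : α → ι, #{s ∈ X | c ∈ coloringsOf s} =
      #X * Fintype.card ι ^ (Fintype.card α - m) := by
  refine (sum_card_bipartiteAbove_eq_sum_card_bipartiteBelow
    (r := fun c s => c ∈ coloringsOf s)).trans (sum_const_nat fun s hs => ?_)
  rw [← (hX s hs).2, ← card_coloringsOf (hX s hs).1]
  simp [bipartiteBelow]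

theorem piFinset_restrictToColor (S : ι → Finset (Finset α)) (c : α → ι) :
    Fintype.piFinset (restrictToColor S c) =
      {s ∈ Fintype.piFinset S | c ∈ coloringsOf s} := by
  ext s
  simp only [mem_restrictToColor, coloringsOf, Fintype.mem_piFinset, mem_filter, mem_univ,
    true_and]
  exact ⟨fun h => ⟨fun i => (h i).1, fun i => (h i).2⟩, fun h i => ⟨h.1 i, h.2 i⟩⟩

end Fintype

end Finset

theorem abs_sub_mul_le_of_sum_eq {Γ : Type*} [Fintype Γ] [Nonempty Γ] {a b : Γ → ℝ}
    {A B p ε N M : ℝ} (hN : 0 < N) (hcard : (Fintype.card Γ : ℝ) ≤ M * N)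
    (h : ∀ c, |a c - p * b c| ≤ ε) (ha : ∑ c, a c = A * N) (hb : ∑ c, b c = B * N) :
    |A - p * B| ≤ M * ε := by
  have hε : 0 ≤ ε := (abs_nonneg _).trans (h (Classical.arbitrary Γ))
  refine le_of_mul_le_mul_right ?_ hN
  calc |A - p * B| * N = |∑ c, (a c - p * b c)| := by
        rw [Finset.sum_sub_distrib, ← Finset.mul_sum, ha, hb, ← abs_of_pos hN, ← abs_mul,
          abs_of_pos hN]
        ring_nf
    _ ≤ ∑ c, |a c - p * b c| := Finset.abs_sum_le_sum_abs _ _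
    _ ≤ Fintype.card Γ * ε := by
        simpa using Finset.sum_le_sum fun c (_ : c ∈ Finset.univ) => h c
    _ ≤ M * ε * N := by nlinarith
section Hypergraph

variable {n t k : ℕ} {H : Finset (Finset (Fin n))} {κ : Fin t → ℕ} {p ε : ℝ}

def PartiteExpandAt (H : Finset (Finset (Fin n))) (κ : Fin t → ℕ) (p ε : ℝ) : Prop :=
  ∀ S : Fin t → Finset (Finset (Fin n)), (∀ i, ∀ s ∈ S i, #s = κ i) →
    (∀ i j, i ≠ j → Disjoint ((S i).biUnion id) ((S j).biUnion id)) →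
    |(eCount H S : ℝ) - p * ∏ i, (#(S i) : ℝ)| ≤ ε

open scoped Classical in
theorem abs_eCount_sub_mul_card_pairwise_disjoint_le (ht : 0 < t) (hH : ∀ e ∈ H, #e = k)
    (hκ : ∑ i, κ i = k)
    (hpart : PartiteExpandAt H κ p ε)
    (S : Fin t → Finset (Finset (Fin n))) (hS : ∀ i, ∀ s ∈ S i, #s = κ i) :
    |(eCount H S : ℝ) - p * #{s ∈ Fintype.piFinset S | Pairwise (Disjoint on s)}| ≤
      t ^ k * ε := by
  have hsum : ∀ s ∈ Fintype.piFinset S, ∑ i, #(s i) = k := fun s hs =>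
    hκ ▸ sum_congr rfl fun i _ => hS i _ (Fintype.mem_piFinset.1 hs i)
  have hedges : ∀ c : Fin n → Fin t, eCount H (restrictToColor S c) =
      #{s ∈ {s ∈ Fintype.piFinset S | univ.biUnion s ∈ H} | c ∈ coloringsOf s} := fun c => by
    rw [eCount, piFinset_restrictToColor, filter_comm]
  have htuples : ∀ c : Fin n → Fin t, ∏ i, #(restrictToColor S c i) =
      #{s ∈ {s ∈ Fintype.piFinset S | Pairwise (Disjoint on s)} | c ∈ coloringsOf s} :=
    fun c => by
      rw [← Fintype.card_piFinset, piFinset_restrictToColor, filter_filter]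
      refine congrArg card (filter_congr fun s _ => ⟨fun hc => ⟨?_, hc⟩, And.right⟩)
      by_contra hs
      simp [coloringsOf_eq_empty hs] at hc
  have : Nonempty (Fin t) := ⟨⟨0, ht⟩⟩
  have hcount := fun X hX =>
    sum_card_filter_mem_coloringsOf (α := Fin n) (ι := Fin t) (m := k) X hX
  simp only [Fintype.card_fin] at hcount
  refine abs_sub_mul_le_of_sum_eq (Γ := Fin n → Fin t) (N := (t : ℝ) ^ (n - k))
    (a := fun c => eCount H (restrictToColor S c))
    (b := fun c => ∏ i, #(restrictToColor S c i)) (by positivity) ?_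
    (fun c => hpart _ (fun i s hs => hS i s (mem_restrictToColor.1 hs).1) fun i j hij =>
      pairwise_disjoint_restrictToColor S c hij) ?_ ?_
  · rw [Fintype.card_fun, Fintype.card_fin, Fintype.card_fin, ← pow_add]
    exact_mod_cast Nat.pow_le_pow_right ht (by omega)
  · simp only [hedges]
    exact_mod_cast hcount _ fun s hs => by
      obtain ⟨hsS, hsH⟩ := mem_filter.1 hs
      exact ⟨pairwise_disjoint_of_card_biUnion (by rw [hH _ hsH, hsum s hsS]), hsum s hsS⟩
  · simp only [← Nat.cast_prod, htuples]
    exact_mod_cast hcount _ fun s hs => ⟨(mem_filter.1 hs).2, hsum s (mem_filter.1 hs).1⟩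

theorem abs_eCount_sub_le (ht : 0 < t) (hH : ∀ e ∈ H, #e = k) (hκpos : ∀ i, 0 < κ i)
    (hκ : ∑ i, κ i = k)
    (hpart : PartiteExpandAt H κ p ε)
    (S : Fin t → Finset (Finset (Fin n))) (hS : ∀ i, ∀ s ∈ S i, #s = κ i) :
    |(eCount H S : ℝ) - p * ∏ i, (#(S i) : ℝ)| ≤
      t ^ k * ε + |p| * (t ^ 2 * n ^ (k - 1)) := by
  classical
  set D := {s ∈ Fintype.piFinset S | Pairwise (Disjoint on s)}
  set ND := {s ∈ Fintype.piFinset S | ¬Pairwise (Disjoint on s)}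
  have hsplit : ∏ i, (#(S i) : ℝ) = #D + #ND := by
    rw [← Nat.cast_prod, ← Fintype.card_piFinset,
      ← card_filter_add_card_filter_not (fun s => Pairwise (Disjoint on s))]
    push_cast
    rfl
  have hND : (#ND : ℝ) ≤ t ^ 2 * n ^ (k - 1) := by
    have := card_filter_not_pairwise_disjoint_le S hκpos hS
    simp only [Fintype.card_fin, hκ] at this
    exact_mod_cast this
  calc |(eCount H S : ℝ) - p * ∏ i, (#(S i) : ℝ)|
      = |((eCount H S : ℝ) - p * #D) + -(p * #ND)| := by rw [hsplit]; ring_nf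
    _ ≤ |(eCount H S : ℝ) - p * #D| + |p| * #ND := by
        refine (abs_add_le _ _).trans_eq ?_
        rw [abs_neg, abs_mul, Nat.abs_cast]
    _ ≤ t ^ k * ε + |p| * (t ^ 2 * n ^ (k - 1)) :=
        add_le_add (abs_eCount_sub_mul_card_pairwise_disjoint_le ht hH hκ hpart S hS)
          (mul_le_mul_of_nonneg_left hND (abs_nonneg p))

end Hypergraph

theorem partiteExpand_implies_expand_general (k : ℕ) (p : ℝ) (π : List ℕ) (hπ : ProperPartition k π)
    (H : HSeq) (hH : UniformSeq k H) (h : PartiteExpand k p π H) :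
    Expand k p π H := by
  obtain ⟨hlen, hpos, hsum⟩ := hπ
  obtain ⟨f, hf, hpart⟩ := h
  have ht : 0 < π.length := by omega
  have hκpos : ∀ i, 0 < π.get i := fun i => hpos _ (π.get_mem i)
  have hκ : ∑ i, π.get i = k := by simp [hsum]
  have hk : 0 < k := hκ ▸ sum_pos (fun i _ => hκpos i) (univ_nonempty_iff.2 ⟨⟨0, ht⟩⟩)
  refine ⟨fun n => π.length ^ k * f n + |p| * (π.length ^ 2 * n ^ (k - 1)), ?_,
    fun n S hS => abs_eCount_sub_le ht (hH n) hκpos hκ (hpart n) S hS⟩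
  have hpow : (fun n : ℕ => (n : ℝ) ^ (k - 1)) =o[atTop] fun n => (n : ℝ) ^ k :=
    (isLittleO_pow_pow_atTop_of_lt (by omega)).comp_tendsto tendsto_natCast_atTop_atTop
  exact (hf.const_mul_left _).add ((hpow.const_mul_left _).const_mul_left _)

/-- `PartiteExpand_p(π)` implies `Expand_p(π)`. -/
theorem partiteExpand_implies_expand (k : ℕ) (hk : 2 ≤ k)
    (p : ℝ) (hp0 : 0 < p) (hp1 : p < 1)
    (π : List ℕ) (hπ : ProperPartition k π)
    (H : HSeq) (hH : UniformSeq k H) (h : PartiteExpand k p π H) :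
    Expand k p π H :=
  partiteExpand_implies_expand_general k p π hπ H hH h
end

section
/- Let k ≥ 2, let 0 < p < 1, and let π and π' be proper partitions of k such that π' is a refinement of π. Then every hypergraph sequence satisfying Expand_p(π) also satisfies Expand_p(π'). -/
open Filter Finset Asymptotics

/-!
Group the parts of `π'` along the refinement map `φ : π' → π`. A tuple `(s_j)` in
`S'_1 × ⋯ × S'_r` determines the tuple of unions `u_i = ⋃_{φ j = i} s_j`, so `e(S'_1, …, S'_r)`
is the weighted count `∑_u [⋃ u ∈ E(H)] ∏_i N_i(u_i)`, where `N_i(u)` is the number of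
subtuples over the fibre of `i` with union `u`. As edges have exactly `k` vertices, only tuples
with `|u_i| = k_i` for all `i` contribute. The weights are bounded by `C = 2^{kr}`, and the
layer-cake formula `N_i = ∑_{c < C} [c < N_i]` turns the weighted count into `C^t` counts
`e(T_1, …, T_t)` with `T_i ⊆ binom(V, k_i)`, each controlled by `Expand_p(π)`. Finally,
`|S'_1| ⋯ |S'_r| = ∏_i ∑_u N_i(u)`, and dropping the weight of the sets of size `< k_i` changes
this product by `O(n^{k-1})`.
-/

variable {n t : ℕ}

def weightedCount (H : Finset (Finset (Fin n))) (w : Fin t → Finset (Fin n) → ℕ) : ℕ :=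
  ∑ u : Fin t → Finset (Fin n), if univ.biUnion u ∈ H then ∏ i, w i (u i) else 0

lemma eCount_eq_weightedCount (H : Finset (Finset (Fin n)))
    (S : Fin t → Finset (Finset (Fin n))) :
    eCount H S = weightedCount H (fun i u => if u ∈ S i then 1 else 0) := by
  have hpi : Fintype.piFinset S = univ.filter (fun u => ∀ i, u i ∈ S i) := by
    ext u; simp
  rw [eCount, card_filter, hpi, sum_filter, weightedCount]
  refine sum_congr rfl fun u _ => ?_
  rw [prod_boole]
  by_cases h1 : ∀ i, u i ∈ S i <;> by_cases h2 : univ.biUnion u ∈ H <;> simp [h1, h2]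

lemma sum_range_ite_lt {m C : ℕ} (h : m ≤ C) :
    ∑ c ∈ range C, (if c < m then 1 else 0) = m := by
  have hfilter : (range C).filter (· < m) = range m := by
    ext c
    simp only [mem_filter, mem_range]
    omega
  rw [sum_boole, Nat.cast_id, hfilter, card_range]

def superlevelSet (w : Finset (Fin n) → ℕ) (c : ℕ) : Finset (Finset (Fin n)) :=
  univ.filter (fun u => c < w u)

lemma sum_eq_sum_card_superlevelSet {C : ℕ} (w : Finset (Fin n) → ℕ) (hw : ∀ u, w u ≤ C) :
    ∑ u, w u = ∑ c ∈ range C, #(superlevelSet w c) := by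
  simp only [superlevelSet, card_filter]
  rw [sum_comm]
  exact sum_congr rfl fun u _ => (sum_range_ite_lt (hw u)).symm

lemma weightedCount_eq_sum_eCount_superlevelSet {C : ℕ} (H : Finset (Finset (Fin n)))
    (w : Fin t → Finset (Fin n) → ℕ) (hw : ∀ i u, w i u ≤ C) :
    weightedCount H w =
      ∑ c ∈ Fintype.piFinset (fun _ : Fin t => range C),
        eCount H (fun i => superlevelSet (w i) (c i)) := by
  simp only [eCount_eq_weightedCount, weightedCount, superlevelSet, mem_filter, mem_univ, true_and]
  rw [sum_comm]
  refine sum_congr rfl fun u _ => ?_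
  split_ifs
  · exact (prod_congr rfl fun i _ => (sum_range_ite_lt (hw _ _)).symm).trans (prod_univ_sum _ _)
  · simp

lemma abs_weightedCount_sub_le {H : Finset (Finset (Fin n))} {a : Fin t → ℕ} {p F : ℝ}
    (hH : ∀ S : Fin t → Finset (Finset (Fin n)), (∀ i, ∀ s ∈ S i, s.card = a i) →
      |(eCount H S : ℝ) - p * ∏ i, (#(S i) : ℝ)| ≤ F)
    {C : ℕ} (w : Fin t → Finset (Fin n) → ℕ) (hwC : ∀ i u, w i u ≤ C)
    (hwa : ∀ i u, w i u ≠ 0 → u.card = a i) :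
    |(weightedCount H w : ℝ) - p * ∏ i, ∑ u, (w i u : ℝ)| ≤ C ^ t * F := by
  have hlevel (c : Fin t → ℕ) (i : Fin t) : ∀ s ∈ superlevelSet (w i) (c i), s.card = a i := by
    intro s hs
    exact hwa i s (by simp only [superlevelSet, mem_filter] at hs; omega)
  have hprod : ∏ i, ∑ u, (w i u : ℝ) =
      ∑ c ∈ Fintype.piFinset (fun _ : Fin t => range C),
        ∏ i, (#(superlevelSet (w i) (c i)) : ℝ) := by
    simp only [← Nat.cast_sum, sum_eq_sum_card_superlevelSet (w _) (hwC _)]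
    push_cast
    exact prod_univ_sum (fun _ => range C) fun i c => (#(superlevelSet (w i) c) : ℝ)
  rw [weightedCount_eq_sum_eCount_superlevelSet H w hwC, hprod, Nat.cast_sum, mul_sum,
    ← sum_sub_distrib]
  calc _ ≤ ∑ c ∈ Fintype.piFinset (fun _ : Fin t => range C),
        |(eCount H (fun i => superlevelSet (w i) (c i)) : ℝ) -
          p * ∏ i, (#(superlevelSet (w i) (c i)) : ℝ)| := abs_sum_le_sum_abs _ _
    _ ≤ ∑ _c ∈ Fintype.piFinset (fun _ : Fin t => range C), F :=
      sum_le_sum fun c _ => hH _ (hlevel c)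
    _ = C ^ t * F := by simp

lemma card_le_pow_of_forall_card_eq {S : Finset (Finset (Fin n))} {b : ℕ}
    (hS : ∀ s ∈ S, s.card = b) : #S ≤ n ^ b :=
  (card_le_card fun s hs => mem_powersetCard.2 ⟨subset_univ s, hS s hs⟩).trans
    (by simpa using Nat.choose_le_pow n b)

section Grouping

variable {t' : ℕ} (φ : Fin t' → Fin t)

def groupUnion (s : Fin t' → Finset (Fin n)) (i : Fin t) : Finset (Fin n) :=
  univ.biUnion fun j : {j // φ j = i} => s j

def groupCount (S : Fin t' → Finset (Finset (Fin n))) (i : Fin t) (u : Finset (Fin n)) : ℕ :=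
  #{s ∈ Fintype.piFinset (fun j : {j // φ j = i} => S j) | univ.biUnion s = u}

lemma biUnion_groupUnion (s : Fin t' → Finset (Fin n)) :
    univ.biUnion (groupUnion φ s) = univ.biUnion s := by
  ext x
  simp only [groupUnion, mem_biUnion, mem_univ, true_and, Subtype.exists]
  exact ⟨fun ⟨_, j, _, hx⟩ => ⟨j, hx⟩, fun ⟨j, hx⟩ => ⟨φ j, j, rfl, hx⟩⟩

variable (S : Fin t' → Finset (Finset (Fin n)))

lemma card_filter_groupUnion_eq (u : Fin t → Finset (Fin n)) :
    #{s ∈ Fintype.piFinset S | groupUnion φ s = u} = ∏ i, groupCount φ S i (u i) := by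
  simp only [groupCount]
  rw [← Fintype.card_piFinset]
  refine card_equiv (Equiv.piCongrFiberwise fun _ => Equiv.refl _) fun s => ?_
  simp only [mem_filter, Fintype.mem_piFinset, groupUnion, funext_iff,
    Equiv.piCongrFiberwise_apply, Equiv.refl_apply]
  rw [forall_and]
  exact and_congr_left' ⟨fun h i j => h j, fun h j => h (φ j) ⟨j, rfl⟩⟩

lemma eCount_eq_weightedCount_groupCount (H : Finset (Finset (Fin n))) :
    eCount H S = weightedCount H (groupCount φ S) := by
  rw [eCount, card_eq_sum_card_fiberwise (f := groupUnion φ) (t := univ) fun _ _ => mem_univ _,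
    weightedCount]
  refine sum_congr rfl fun u _ => ?_
  rw [filter_filter]
  split_ifs with hu
  · rw [← card_filter_groupUnion_eq]
    refine congrArg card (filter_congr fun s _ => ⟨And.right, fun h => ⟨?_, h⟩⟩)
    rwa [← biUnion_groupUnion φ, h]
  · refine card_eq_zero.2 (filter_eq_empty_iff.2 ?_)
    rintro s - ⟨hs, rfl⟩
    exact hu (by rwa [biUnion_groupUnion])

lemma sum_groupCount (i : Fin t) :
    ∑ u, groupCount φ S i u = ∏ j : {j // φ j = i}, #(S j) := by
  rw [← Fintype.card_piFinset, card_eq_sum_card_fiberwise (f := fun s => univ.biUnion s)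
    (t := univ) fun _ _ => mem_univ _]
  rfl

lemma prod_card_eq_prod_sum_groupCount :
    ∏ j, #(S j) = ∏ i, ∑ u, groupCount φ S i u := by
  simp only [sum_groupCount]
  exact (Fintype.prod_fiberwise φ _).symm

lemma groupCount_le (i : Fin t) (u : Finset (Fin n)) :
    groupCount φ S i u ≤ 2 ^ (u.card * t') := by
  calc groupCount φ S i u
      ≤ #(Fintype.piFinset fun _ : {j // φ j = i} => u.powerset) := by
        refine card_le_card fun s hs => ?_
        simp only [mem_filter, Fintype.mem_piFinset] at hs ⊢
        exact fun j => mem_powerset.2 (hs.2 ▸ subset_biUnion_of_mem _ (mem_univ j))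
    _ = (2 ^ u.card) ^ Fintype.card {j // φ j = i} := by simp
    _ ≤ 2 ^ (u.card * t') := by
        rw [pow_mul]
        exact Nat.pow_le_pow_right Nat.one_le_two_pow
          ((Fintype.card_subtype_le _).trans_eq (Fintype.card_fin _))

lemma card_le_of_groupCount_ne_zero {b : Fin t' → ℕ} (hS : ∀ j, ∀ s ∈ S j, s.card = b j)
    {i : Fin t} {u : Finset (Fin n)} (h : groupCount φ S i u ≠ 0) :
    u.card ≤ ∑ j with φ j = i, b j := by
  obtain ⟨s, hs⟩ := card_ne_zero.1 h
  simp only [mem_filter, Fintype.mem_piFinset] at hs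
  calc u.card = (univ.biUnion fun j : {j // φ j = i} => s j).card := by rw [hs.2]
    _ ≤ ∑ j : {j // φ j = i}, (s j).card := card_biUnion_le
    _ = ∑ j with φ j = i, b j := by
        rw [sum_subtype _ (p := fun j => φ j = i) (fun j => by simp) b]
        exact sum_congr rfl fun j _ => hS j _ (hs.1 j)

lemma sum_groupCount_le {b : Fin t' → ℕ} (hS : ∀ j, ∀ s ∈ S j, s.card = b j) (i : Fin t) :
    ∑ u, groupCount φ S i u ≤ n ^ ∑ j with φ j = i, b j := by
  rw [sum_groupCount, sum_subtype _ (p := fun j => φ j = i) (fun j => by simp) b,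
    ← prod_pow_eq_pow_sum]
  exact prod_le_prod' fun j _ => card_le_pow_of_forall_card_eq (hS j)

end Grouping

lemma weightedCount_eq_of_card_le {k : ℕ} {H : Finset (Finset (Fin n))}
    (hH : ∀ e ∈ H, e.card = k) {a : Fin t → ℕ} (ha : ∑ i, a i = k)
    {w : Fin t → Finset (Fin n) → ℕ} (hw : ∀ i u, w i u ≠ 0 → u.card ≤ a i) :
    weightedCount H w = weightedCount H fun i u => if u.card = a i then w i u else 0 := by
  refine sum_congr rfl fun u _ => ?_
  split_ifs with hu
  · by_cases hw0 : ∀ i, w i (u i) ≠ 0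
    · have hle : ∀ i ∈ univ, (u i).card ≤ a i := fun i _ => hw i _ (hw0 i)
      have hk : k ≤ ∑ i, (u i).card := hH _ hu ▸ card_biUnion_le
      have heq := (sum_eq_sum_iff_of_le hle).1 (le_antisymm (sum_le_sum hle) (ha ▸ hk))
      exact prod_congr rfl fun i _ => (if_pos (heq i (mem_univ i))).symm
    · obtain ⟨i, hi⟩ : ∃ i, w i (u i) = 0 := by simpa using hw0
      rw [prod_eq_zero (mem_univ i) hi, prod_eq_zero (mem_univ i) (by simp [hi])]
  · rfl

-- `n + 1` rather than `n`, so that the bound also holds for `n = 0`.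
lemma card_filter_card_lt_le (n K : ℕ) :
    #{u : Finset (Fin n) | u.card < K} ≤ K * (n + 1) ^ (K - 1) := by
  calc #{u : Finset (Fin n) | u.card < K}
      ≤ #((range K).biUnion fun c => powersetCard c (univ : Finset (Fin n))) :=
        card_le_card fun u hu => by simpa using hu
    _ ≤ ∑ c ∈ range K, #(powersetCard c (univ : Finset (Fin n))) := card_biUnion_le
    _ = ∑ c ∈ range K, n.choose c := by simp
    _ ≤ ∑ _c ∈ range K, (n + 1) ^ (K - 1) := sum_le_sum fun c hc =>
        (Nat.choose_le_pow n c).trans <| (Nat.pow_le_pow_left n.le_succ c).trans <|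
          Nat.pow_le_pow_right n.succ_pos (by rw [mem_range] at hc; omega)
    _ = K * (n + 1) ^ (K - 1) := by simp

lemma sum_sub_sum_ite_card_eq_le {a C : ℕ} {w : Finset (Fin n) → ℕ}
    (hwC : ∀ u, u.card ≤ a → w u ≤ C) (hw : ∀ u, w u ≠ 0 → u.card ≤ a) :
    ∑ u, (w u : ℝ) - ∑ u, ((if u.card = a then w u else 0 : ℕ) : ℝ) ≤
      C * a * (n + 1) ^ (a - 1) := by
  calc ∑ u, (w u : ℝ) - ∑ u, ((if u.card = a then w u else 0 : ℕ) : ℝ)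
      ≤ ∑ u : Finset (Fin n), if u.card < a then (C : ℝ) else 0 := by
        rw [← sum_sub_distrib]
        refine sum_le_sum fun u _ => ?_
        by_cases hw0 : w u = 0
        · simp only [hw0, ite_self, Nat.cast_zero, sub_zero]
          positivity
        have hua := hw u hw0
        rcases hua.lt_or_eq with hlt | heq
        · simp [hlt, hlt.ne, hwC u hua]
        · simp [heq]
    _ = C * #{u : Finset (Fin n) | u.card < a} := by
        rw [← sum_filter, sum_const, nsmul_eq_mul, mul_comm]
    _ ≤ C * a * (n + 1) ^ (a - 1) := by
        rw [mul_assoc]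
        exact mul_le_mul_of_nonneg_left (by exact_mod_cast card_filter_card_lt_le n a)
          C.cast_nonneg

lemma prod_sub_prod_le_sum_mul_prod {ι R : Type*} [DecidableEq ι] [CommRing R] [PartialOrder R]
    [IsOrderedRing R] (s : Finset ι) {f g M : ι → R} (hg : ∀ i ∈ s, 0 ≤ g i)
    (hgf : ∀ i ∈ s, g i ≤ f i) (hfM : ∀ i ∈ s, f i ≤ M i) :
    ∏ i ∈ s, f i - ∏ i ∈ s, g i ≤ ∑ i ∈ s, (f i - g i) * ∏ j ∈ s.erase i, M j := by
  induction s using Finset.induction_on with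
  | empty => simp
  | @insert a s ha ih =>
    simp only [mem_insert, forall_eq_or_imp] at hg hgf hfM
    have hf : ∀ i ∈ s, 0 ≤ f i := fun i hi => (hg.2 i hi).trans (hgf.2 i hi)
    have hfg : ∏ i ∈ s, g i ≤ ∏ i ∈ s, f i := prod_le_prod hg.2 hgf.2
    have hsum : ∑ i ∈ s, (f i - g i) * ∏ j ∈ (insert a s).erase i, M j =
        M a * ∑ i ∈ s, (f i - g i) * ∏ j ∈ s.erase i, M j := by
      rw [mul_sum]
      refine sum_congr rfl fun i hi => ?_
      rw [erase_insert_of_ne (ne_of_mem_of_not_mem hi ha).symm,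
        prod_insert fun h => ha (mem_of_mem_erase h)]
      ring
    rw [prod_insert ha, prod_insert ha, sum_insert ha, erase_insert ha, hsum]
    have h1 : (f a - g a) * ∏ i ∈ s, f i ≤ (f a - g a) * ∏ i ∈ s, M i :=
      mul_le_mul_of_nonneg_left (prod_le_prod hf hfM.2) (sub_nonneg.2 hgf.1)
    have h2 : g a * (∏ i ∈ s, f i - ∏ i ∈ s, g i) ≤
        M a * ∑ i ∈ s, (f i - g i) * ∏ j ∈ s.erase i, M j :=
      mul_le_mul (hgf.1.trans hfM.1) (ih hg.2 hgf.2 hfM.2) (sub_nonneg.2 hfg)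
        (hg.1.trans (hgf.1.trans hfM.1))
    linear_combination h1 + h2

lemma prod_sub_prod_le_of_sub_le {x C : ℝ} (hx : 0 ≤ x) {a : Fin t → ℕ}
    {f g : Fin t → ℝ} (hg : ∀ i, 0 ≤ g i) (hgf : ∀ i, g i ≤ f i) (hf : ∀ i, f i ≤ x ^ a i)
    (hfg : ∀ i, f i - g i ≤ C * a i * x ^ (a i - 1)) :
    ∏ i, f i - ∏ i, g i ≤ C * (∑ i, a i : ℕ) * x ^ (∑ i, a i - 1) := by
  have hexp (i : Fin t) (hi : 0 < a i) :
      x ^ (a i - 1) * ∏ j ∈ univ.erase i, x ^ a j = x ^ (∑ i, a i - 1) := by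
    rw [prod_pow_eq_pow_sum, ← pow_add]
    have := add_sum_erase univ a (mem_univ i)
    congr 1
    omega
  calc ∏ i, f i - ∏ i, g i ≤ ∑ i, (f i - g i) * ∏ j ∈ univ.erase i, x ^ a j :=
        prod_sub_prod_le_sum_mul_prod univ (fun i _ => hg i) (fun i _ => hgf i) fun i _ => hf i
    _ ≤ ∑ i, C * a i * x ^ (∑ i, a i - 1) := sum_le_sum fun i _ => by
        calc (f i - g i) * ∏ j ∈ univ.erase i, x ^ a j
            ≤ C * a i * x ^ (a i - 1) * ∏ j ∈ univ.erase i, x ^ a j :=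
              mul_le_mul_of_nonneg_right (hfg i) (by positivity)
          _ = C * a i * x ^ (∑ i, a i - 1) := by
              rcases (a i).eq_zero_or_pos with h0 | hpos
              · simp [h0]
              · rw [mul_assoc, hexp i hpos]
    _ = C * (∑ i, a i : ℕ) * x ^ (∑ i, a i - 1) := by
        rw [← sum_mul, ← mul_sum]
        push_cast
        ring

lemma abs_weightedCount_sub_le_of_card_le {k C : ℕ} {a : Fin t → ℕ} (ha : ∑ i, a i = k)
    {H : Finset (Finset (Fin n))} (hH : ∀ e ∈ H, e.card = k) {p F : ℝ}
    (hF : ∀ S : Fin t → Finset (Finset (Fin n)), (∀ i, ∀ s ∈ S i, s.card = a i) →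
      |(eCount H S : ℝ) - p * ∏ i, (#(S i) : ℝ)| ≤ F)
    {w : Fin t → Finset (Fin n) → ℕ} (hw : ∀ i u, w i u ≠ 0 → u.card ≤ a i)
    (hwC : ∀ i u, u.card ≤ a i → w i u ≤ C) (hA : ∀ i, ∑ u, w i u ≤ (n + 1) ^ a i) :
    |(weightedCount H w : ℝ) - p * ∏ i, ∑ u, (w i u : ℝ)| ≤
      C ^ t * F + |p| * (C * k * (n + 1) ^ (k - 1)) := by
  set w' : Fin t → Finset (Fin n) → ℕ := fun i u => if u.card = a i then w i u else 0
  have hw'C (i u) : w' i u ≤ C := by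
    by_cases h : u.card = a i
    · simpa [w', h] using hwC i u h.le
    · simp [w', h]
  have hw'a (i u) (h : w' i u ≠ 0) : u.card = a i := by
    by_contra h'
    simp [w', h'] at h
  have hcount : |(weightedCount H w : ℝ) - p * ∏ i, ∑ u, (w' i u : ℝ)| ≤ C ^ t * F := by
    rw [weightedCount_eq_of_card_le hH ha hw]
    exact abs_weightedCount_sub_le hF w' hw'C hw'a
  have hB (i) : ∑ u, (w' i u : ℝ) ≤ ∑ u, (w i u : ℝ) := by
    refine sum_le_sum fun u _ => ?_
    by_cases h : u.card = a i <;> simp [w', h]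
  have herr :
      ∏ i, ∑ u, (w i u : ℝ) - ∏ i, ∑ u, (w' i u : ℝ) ≤ C * k * (n + 1) ^ (k - 1) := by
    have := prod_sub_prod_le_of_sub_le (x := (n : ℝ) + 1) (by positivity)
      (fun i => by positivity) hB (fun i => by exact_mod_cast hA i)
      fun i => sum_sub_sum_ite_card_eq_le (hwC i) (hw i)
    rwa [ha] at this
  have hdiff : 0 ≤ ∏ i, ∑ u, (w i u : ℝ) - ∏ i, ∑ u, (w' i u : ℝ) :=
    sub_nonneg.2 (prod_le_prod (fun i _ => by positivity) fun i _ => hB i)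
  calc _ = |((weightedCount H w : ℝ) - p * ∏ i, ∑ u, (w' i u : ℝ)) -
        p * (∏ i, ∑ u, (w i u : ℝ) - ∏ i, ∑ u, (w' i u : ℝ))| := by ring_nf
    _ ≤ |(weightedCount H w : ℝ) - p * ∏ i, ∑ u, (w' i u : ℝ)| +
        |p * (∏ i, ∑ u, (w i u : ℝ) - ∏ i, ∑ u, (w' i u : ℝ))| := abs_sub _ _
    _ = |(weightedCount H w : ℝ) - p * ∏ i, ∑ u, (w' i u : ℝ)| +
        |p| * (∏ i, ∑ u, (w i u : ℝ) - ∏ i, ∑ u, (w' i u : ℝ)) := by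
      rw [abs_mul, abs_of_nonneg hdiff]
    _ ≤ _ := add_le_add hcount (mul_le_mul_of_nonneg_left herr (abs_nonneg p))

lemma abs_eCount_sub_le_of_refines {k t' : ℕ} {a : Fin t → ℕ} {b : Fin t' → ℕ}
    (φ : Fin t' → Fin t) (hab : ∀ i, a i = ∑ j with φ j = i, b j) (ha : ∑ i, a i = k)
    {H : Finset (Finset (Fin n))} (hH : ∀ e ∈ H, e.card = k) {p F : ℝ}
    (hF : ∀ S : Fin t → Finset (Finset (Fin n)), (∀ i, ∀ s ∈ S i, s.card = a i) →
      |(eCount H S : ℝ) - p * ∏ i, (#(S i) : ℝ)| ≤ F)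
    (S : Fin t' → Finset (Finset (Fin n))) (hS : ∀ j, ∀ s ∈ S j, s.card = b j) :
    |(eCount H S : ℝ) - p * ∏ j, (#(S j) : ℝ)| ≤
      ((2 : ℝ) ^ (k * t')) ^ t * F + |p| * (2 ^ (k * t') * k * (n + 1) ^ (k - 1)) := by
  have hwC (i u) (h : u.card ≤ a i) : groupCount φ S i u ≤ 2 ^ (k * t') := by
    have hak : a i ≤ k := ha ▸ single_le_sum (fun _ _ => Nat.zero_le _) (mem_univ i)
    exact (groupCount_le φ S i u).trans
      (Nat.pow_le_pow_right two_pos (Nat.mul_le_mul_right _ (h.trans hak)))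
  have hA (i) : ∑ u, groupCount φ S i u ≤ (n + 1) ^ a i :=
    hab i ▸ (sum_groupCount_le φ S hS i).trans (Nat.pow_le_pow_left n.le_succ _)
  have := abs_weightedCount_sub_le_of_card_le ha hH hF
    (fun i u h => hab i ▸ card_le_of_groupCount_ne_zero φ S hS h) hwC hA
  have hprod : ∏ j, (#(S j) : ℝ) = ∏ i, ∑ u, (groupCount φ S i u : ℝ) := by
    exact_mod_cast prod_card_eq_prod_sum_groupCount φ S
  rw [eCount_eq_weightedCount_groupCount φ, hprod]
  exact_mod_cast this

lemma isLittleO_add_one_pow_pow {k : ℕ} (hk : 1 ≤ k) :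
    (fun n : ℕ => ((n : ℝ) + 1) ^ (k - 1)) =o[atTop] fun n => (n : ℝ) ^ k := by
  have hlin : (fun n : ℕ => (n : ℝ) + 1) =O[atTop] fun n => (n : ℝ) := by
    refine IsBigO.of_bound 2 ?_
    filter_upwards [eventually_ge_atTop 1] with n hn
    have : (1 : ℝ) ≤ n := by exact_mod_cast hn
    rw [Real.norm_of_nonneg (by positivity), Real.norm_of_nonneg (by positivity)]
    linarith
  exact (hlin.pow _).trans_isLittleO
    ((isLittleO_pow_pow_atTop_of_lt (by omega)).comp_tendsto tendsto_natCast_atTop_atTop)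

theorem expand_of_refines_general (k : ℕ) (hk : 2 ≤ k)
    (p : ℝ)
    (π π' : List ℕ) (hπ : ProperPartition k π)
    (href : IsRefinement π' π)
    (H : HSeq) (hH : UniformSeq k H) (h : Expand k p π H) :
    Expand k p π' H := by
  obtain ⟨f, hf, hfb⟩ := h
  obtain ⟨φ, -, hφ⟩ := href
  have hsum : ∑ i, π.get i = k := by simpa using hπ.2.2
  refine ⟨fun n => ((2 : ℝ) ^ (k * π'.length)) ^ π.length * |f n| +
    |p| * (2 ^ (k * π'.length) * k * ((n : ℝ) + 1) ^ (k - 1)),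
    ?_, fun n S hS => ?_⟩
  · have hf' : (fun n => |f n|) =o[atTop] fun n => (n : ℝ) ^ k := by
      simpa only [Real.norm_eq_abs] using hf.norm_left
    exact (hf'.const_mul_left _).add
      (((isLittleO_add_one_pow_pow (by omega)).const_mul_left _).const_mul_left _)
  · exact abs_eCount_sub_le_of_refines φ hφ hsum (hH n)
      (fun S hS => (hfb n S hS).trans (le_abs_self _)) S hS

/-- if `π'` refines `π` then `Expand_p(π)` implies `Expand_p(π')`. -/
theorem expand_of_refines (k : ℕ) (hk : 2 ≤ k)
    (p : ℝ) (hp0 : 0 < p) (hp1 : p < 1)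
    (π π' : List ℕ) (hπ : ProperPartition k π) (hπ' : ProperPartition k π')
    (href : IsRefinement π' π)
    (H : HSeq) (hH : UniformSeq k H) (h : Expand k p π H) :
    Expand k p π' H :=
  expand_of_refines_general k hk p π π' hπ href H hH h
end

section
/- Let k ≥ 2, let 2 ≤ ℓ ≤ k, and let π be any proper partition of k. Then every hypergraph sequence satisfying Dev(ℓ) also satisfies Expand_{1/2}(π). -/
open Filter Finset Asymptotics

/-!
Write `F z = -1` or `1` according as the vertex set of the `k`-tuple `z` is an edge or not, and
spread the coordinates over the parts of `π` by a map `β` with fibres of sizes `π i` that separates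
the last two coordinates. Summing `F z` over the tuples `z` whose images of the `β`-fibres lie
in the sets `S i` gives `c (|S_1|⋯|S_t| - 2 e(S_1,…,S_t))` with `c = ∏ (π i)! ≥ 1`. Cauchy–Schwarz, applied `ℓ`
times, each time doubling one of the last `ℓ` coordinates and dropping the indicators of the parts
not containing it, bounds the `2^ℓ`-th power of this sum by `n^(k 2^ℓ - k - ℓ)` times the
octahedral sum `∑_{x,y} ∏_ε F(x, y_ε)`. Since `β` separates two of the last `ℓ` coordinates, no
indicator survives, and the octahedral sum is the deviation sum up to `O(n^(k+ℓ-1))` degenerate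
octahedra. Hence `Dev(ℓ)` gives `|e(S) - |S_1|⋯|S_t| / 2| ^ 2^ℓ = o(n^(k 2^ℓ))`.
-/

open scoped Nat

namespace QuasirandomHypergraph

section FiberImage

variable {V : Type*} [DecidableEq V] {k t : ℕ}

def fiberImage (β : Fin k → Fin t) (z : Fin k → V) (i : Fin t) : Finset V :=
  image z {j | β j = i}

lemma biUnion_fiberImage (β : Fin k → Fin t) (z : Fin k → V) :
    univ.biUnion (fiberImage β z) = image z univ := by
  ext a
  simp only [fiberImage, mem_biUnion, mem_image, mem_filter, mem_univ, true_and]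
  exact ⟨fun ⟨_, j, _, hj⟩ => ⟨j, hj⟩, fun ⟨j, hj⟩ => ⟨β j, j, rfl, hj⟩⟩

lemma card_filter_image_univ_eq [Fintype V] {α : Type*} [Fintype α] [DecidableEq α] (s : Finset V)
    (hs : #s = Fintype.card α) :
    #{f : α → V | image f univ = s} = (Fintype.card α)! := by
  have hinj {f : α → V} (hf : image f univ = s) : Function.Injective f := by
    refine fun a b hab => injOn_of_card_image_eq ?_ (mem_univ a) (mem_univ b) hab
    rw [hf, hs, card_univ]
  let e : {f : α → V // image f univ = s} ≃ (α ↪ s) :=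
    { toFun := fun f =>
        ⟨fun a => ⟨f.1 a, by simpa only [f.2] using mem_image_of_mem f.1 (mem_univ a)⟩,
          fun a b hab => hinj f.2 (congrArg Subtype.val hab)⟩
      invFun := fun g => ⟨fun a => g a, by
        refine (eq_of_subset_of_card_le (fun v hv => ?_) ?_)
        · obtain ⟨a, -, rfl⟩ := mem_image.mp hv
          exact (g a).2
        · rw [card_image_of_injective (f := fun a => (g a : V)) univ
            (Subtype.val_injective.comp g.injective), hs, card_univ]⟩
      left_inv := fun _ => rfl
      right_inv := fun _ => rfl }
  rw [← Fintype.card_subtype, Fintype.card_congr e, Fintype.card_embedding_eq,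
    Fintype.card_coe, hs, Nat.descFactorial_self]

def fiberEquiv (β : Fin k → Fin t) : (Fin k → V) ≃ ((i : Fin t) → {j // β j = i} → V) where
  toFun z _ j := z j
  invFun g j := g (β j) ⟨j, rfl⟩
  left_inv _ := rfl
  right_inv g := by
    funext i ⟨j, hj⟩
    subst hj
    rfl

lemma fiberImage_eq_image_fiberEquiv (β : Fin k → Fin t) (z : Fin k → V) (i : Fin t) :
    fiberImage β z i = image (fiberEquiv β z i) univ := by
  ext a
  simp [fiberImage, fiberEquiv]

lemma card_filter_fiberImage_eq [Fintype V] (β : Fin k → Fin t) (σ : Fin t → Finset V)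
    (hσ : ∀ i, #(σ i) = #{j | β j = i}) :
    #{z : Fin k → V | ∀ i, fiberImage β z i = σ i} = ∏ i, (#(σ i))! := by
  have e : {z : Fin k → V // ∀ i, fiberImage β z i = σ i} ≃
      ((i : Fin t) → {f : {j // β j = i} → V // image f univ = σ i}) :=
    (Equiv.subtypeEquiv (fiberEquiv β) fun z => by
      simp only [fiberImage_eq_image_fiberEquiv]).trans Equiv.subtypePiEquivPi
  rw [← Fintype.card_subtype, Fintype.card_congr e, Fintype.card_pi]
  refine prod_congr rfl fun i _ => ?_
  have hcard : #(σ i) = Fintype.card {j // β j = i} := by rw [Fintype.card_subtype, hσ]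
  rw [Fintype.card_subtype, card_filter_image_univ_eq _ hcard, hcard]

lemma sum_fiberImage_mem [Fintype V] (β : Fin k → Fin t) (S : Fin t → Finset (Finset V))
    (hS : ∀ i, ∀ s ∈ S i, #s = #{j | β j = i}) (g : (Fin t → Finset V) → ℝ) :
    ∑ z : Fin k → V, (if ∀ i, fiberImage β z i ∈ S i then g (fiberImage β z) else 0) =
      (∏ i, ((#{j | β j = i})! : ℝ)) * ∑ σ ∈ Fintype.piFinset S, g σ := by
  rw [← sum_filter, ← sum_fiberwise_of_maps_to (t := Fintype.piFinset S) (g := fiberImage β)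
    (fun z hz => Fintype.mem_piFinset.mpr (mem_filter.mp hz).2), mul_sum]
  refine sum_congr rfl fun σ hσ => ?_
  have hσS : ∀ i, σ i ∈ S i := Fintype.mem_piFinset.mp hσ
  have hσcard : ∀ i, #(σ i) = #{j | β j = i} := fun i => hS i _ (hσS i)
  have hfiber : ((univ.filter fun z : Fin k → V => ∀ i, fiberImage β z i ∈ S i).filter
      fun z => fiberImage β z = σ) = univ.filter fun z => ∀ i, fiberImage β z i = σ i := by
    ext z
    simp only [mem_filter, mem_univ, true_and, funext_iff]
    exact ⟨fun h => h.2, fun h => ⟨fun i => h i ▸ hσS i, h⟩⟩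
  rw [sum_congr rfl fun z hz => congrArg g (mem_filter.mp hz).2, sum_const, hfiber,
    card_filter_fiberImage_eq β σ hσcard, nsmul_eq_mul]
  push_cast
  simp only [hσcard]

end FiberImage

lemma exists_card_fiber_eq {k t : ℕ} (c : Fin t → ℕ) (hc : ∑ i, c i = k) :
    ∃ β : Fin k → Fin t, ∀ i, #{j | β j = i} = c i := by
  let e : Fin k ≃ Σ i, Fin (c i) := (finCongr hc.symm).trans finSigmaFinEquiv.symm
  refine ⟨fun j => (e j).1, fun i => ?_⟩
  rw [← Fintype.card_subtype, Fintype.card_congr ((e.subtypeEquiv fun _ => Iff.rfl).trans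
    (Equiv.sigmaSubtype i)), Fintype.card_fin]

lemma exists_card_fiber_eq_of_ne {k t : ℕ} (hk : 2 ≤ k) (ht : 2 ≤ t) (c : Fin t → ℕ)
    (hc_pos : ∀ i, 0 < c i) (hc : ∑ i, c i = k) :
    ∃ β : Fin k → Fin t, (∀ i, #{j | β j = i} = c i) ∧
      ∃ a b : Fin k, β a ≠ β b ∧ k - 2 ≤ a ∧ k - 2 ≤ b := by
  obtain ⟨β₀, hβ₀⟩ := exists_card_fiber_eq c hc
  let a : Fin k := ⟨k - 1, by omega⟩
  let b : Fin k := ⟨k - 2, by omega⟩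
  obtain ⟨i, hi⟩ := Fintype.exists_ne_of_one_lt_card (by rw [Fintype.card_fin]; omega) (β₀ a)
  obtain ⟨j₀, hj₀⟩ : ∃ j₀, β₀ j₀ = i := by
    have := hβ₀ i ▸ hc_pos i
    obtain ⟨j₀, hj₀⟩ := card_pos.mp this
    exact ⟨j₀, (mem_filter.mp hj₀).2⟩
  let σ := Equiv.swap b j₀
  refine ⟨β₀ ∘ σ, fun i' => ?_, a, b, ?_, by simp only [a]; omega, le_rfl⟩
  · rw [← hβ₀, ← Fintype.card_subtype, ← Fintype.card_subtype]
    exact Fintype.card_congr (σ.subtypeEquiv fun _ => Iff.rfl)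
  · have hab : a ≠ b := fun h => by simp only [a, b, Fin.ext_iff] at h; omega
    have haj₀ : a ≠ j₀ := fun h => hi (h ▸ hj₀).symm
    simp only [Function.comp_apply, σ, Equiv.swap_apply_left,
      Equiv.swap_apply_of_ne_of_ne hab haj₀, hj₀]
    exact hi.symm

lemma card_filter_not_injective_le {I V : Type*} [Fintype I] [DecidableEq I] [Fintype V]
    [DecidableEq V] :
    #{g : I → V | ¬Function.Injective g} ≤
      Fintype.card I ^ 2 * Fintype.card V ^ (Fintype.card I - 1) := by
  have hsub : ({g : I → V | ¬Function.Injective g} : Finset (I → V)) ⊆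
      (univ : Finset I).offDiag.biUnion fun p => {g : I → V | g p.1 = g p.2} := fun g hg => by
    obtain ⟨a, b, hab, hne⟩ := Function.not_injective_iff.mp (mem_filter.mp hg).2
    exact mem_biUnion.mpr ⟨(a, b), by simpa using hne, by simpa using hab⟩
  have hpair : ∀ p ∈ (univ : Finset I).offDiag,
      #{g : I → V | g p.1 = g p.2} ≤ Fintype.card V ^ (Fintype.card I - 1) := by
    rintro ⟨a, b⟩ hab
    have hne : a ≠ b := (mem_offDiag.mp hab).2.2
    calc #{g : I → V | g a = g b} ≤ #(univ : Finset ({j // j ≠ b} → V)) := by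
          refine card_le_card_of_injOn (fun g j => g j) (fun _ _ => mem_univ _) ?_
          intro g hg g' hg' h
          simp only [coe_filter, mem_univ, true_and, Set.mem_ofPred_eq] at hg hg'
          funext j
          by_cases hj : j = b
          · rw [hj, ← hg, ← hg']
            exact congrFun h ⟨a, hne⟩
          · exact congrFun h ⟨j, hj⟩
      _ = Fintype.card V ^ (Fintype.card I - 1) := by
          simp [Fintype.card_subtype_compl]
  calc _ ≤ ∑ p ∈ (univ : Finset I).offDiag, #{g : I → V | g p.1 = g p.2} :=
        (card_le_card hsub).trans card_biUnion_le
    _ ≤ #(univ : Finset I).offDiag * Fintype.card V ^ (Fintype.card I - 1) :=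
        smul_eq_mul (α := ℕ) _ _ ▸ sum_le_card_nsmul _ _ _ hpair
    _ ≤ Fintype.card I ^ 2 * Fintype.card V ^ (Fintype.card I - 1) := by
        gcongr
        rw [offDiag_card, card_univ, sq]
        exact Nat.sub_le _ _

lemma card_filter_not_injective_sumElim_le {α β V : Type*} [Fintype α] [DecidableEq α]
    [Fintype β] [DecidableEq β] [Fintype V] [DecidableEq V] :
    #{w : (α → V) × (β → V) | ¬Function.Injective (Sum.elim w.1 w.2)} ≤
      (Fintype.card α + Fintype.card β) ^ 2 *
        Fintype.card V ^ (Fintype.card α + Fintype.card β - 1) := by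
  rw [← Fintype.card_sum]
  refine le_trans (card_le_card_of_injOn (fun w => Sum.elim w.1 w.2) (fun w hw => ?_)
    (Equiv.sumArrowEquivProdArrow α β V).symm.injective.injOn) card_filter_not_injective_le
  simpa using hw

lemma pow_two_pow_le_of_sq_le {X : ℕ → ℝ} {N : ℝ} (hN : 0 ≤ N) {k : ℕ}
    (hX : ∀ m < k, X m ^ 2 ≤ N ^ (k + m - 1) * X (m + 1)) :
    ∀ m < k, X 0 ^ 2 ^ (m + 1) ≤ N ^ (k * 2 ^ (m + 1) - k - (m + 1)) * X (m + 1) := by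
  intro m hm
  induction m with
  | zero => simpa [show k * 2 - k - 1 = k - 1 by omega] using hX 0 hm
  | succ m ih =>
    have hexp : k + (m + 1) ≤ k * 2 ^ (m + 1) := by
      have := Nat.lt_two_pow_self (n := m + 1)
      nlinarith
    calc X 0 ^ 2 ^ (m + 2) = (X 0 ^ 2 ^ (m + 1)) ^ 2 := by rw [← pow_mul, ← pow_succ]
      _ ≤ (N ^ (k * 2 ^ (m + 1) - k - (m + 1)) * X (m + 1)) ^ 2 :=
        pow_le_pow_left₀ ((Nat.even_pow.mpr ⟨even_two, by omega⟩).pow_nonneg _) (ih (by omega)) 2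
      _ = N ^ (2 * (k * 2 ^ (m + 1) - k - (m + 1))) * X (m + 1) ^ 2 := by ring
      _ ≤ N ^ (2 * (k * 2 ^ (m + 1) - k - (m + 1))) * (N ^ (k + (m + 1) - 1) * X (m + 2)) :=
        mul_le_mul_of_nonneg_left (hX (m + 1) hm) (by positivity)
      _ = N ^ (k * 2 ^ (m + 2) - k - (m + 2)) * X (m + 2) := by
        have hdouble : k * 2 ^ (m + 2) = 2 * (k * 2 ^ (m + 1)) := by ring
        rw [← mul_assoc, ← pow_add, hdouble]
        congr 2
        omega

lemma isLittleO_rpow_inv_of_isLittleO_pow {f : ℕ → ℝ} {k q : ℕ} (hq : q ≠ 0)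
    (hf : f =o[atTop] fun n => (n : ℝ) ^ (k * q)) :
    (fun n => f n ^ (q : ℝ)⁻¹) =o[atTop] fun n => (n : ℝ) ^ k := by
  refine (hf.rpow (by positivity) (Eventually.of_forall fun n => by positivity)).congr_right
    fun n => ?_
  rw [pow_mul, Real.pow_rpow_inv_natCast (by positivity) hq]

section OctSum

variable {n k : ℕ}

def octSum (k m : ℕ) (G : (Fin k → Fin n) → ℝ) : ℝ :=
  ∑ x : Fin (k - m) → Fin n, ∑ y : Fin m × Fin 2 → Fin n, ∏ ε : Fin m → Fin 2,
    G (octTuple k m x y ε)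

lemma octSum_zero (G : (Fin k → Fin n) → ℝ) : octSum k 0 G = ∑ z, G z := by
  refine sum_congr rfl fun x _ => ?_
  rw [Fintype.sum_unique, Fintype.prod_unique]
  congr 1
  funext i
  simp [octTuple]

/-- The length `q` is free because `k - m` is only propositionally `k - (m + 1) + 1`. -/
def padTuple {V : Type*} (r : ℕ) (x : Fin r → V) (a : V) {q : ℕ} : Fin q → V :=
  fun i => if h : (i : ℕ) < r then x ⟨i, h⟩ else a

lemma padTuple_eq_snoc {V : Type*} (r : ℕ) (x : Fin r → V) (a : V) :
    (padTuple r x a : Fin (r + 1) → V) = Fin.snoc x a := by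
  funext i
  induction i using Fin.lastCases <;> simp [padTuple]

lemma sum_padTuple {V M : Type*} [Fintype V] [AddCommMonoid M] {q : ℕ} (r : ℕ)
    (hq : q = r + 1) (f : (Fin q → V) → M) :
    ∑ x, f x = ∑ x : Fin r → V, ∑ a, f (padTuple r x a) := by
  subst hq
  simp only [padTuple_eq_snoc]
  rw [← (Fin.snocEquiv fun _ => V).sum_comp, Fintype.sum_prod_type, sum_comm]
  rfl

def consRowEquiv (m : ℕ) (V : Type*) :
    (Fin 2 → V) × (Fin m × Fin 2 → V) ≃ (Fin (m + 1) × Fin 2 → V) :=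
  (((Equiv.refl _).prodCongr (Equiv.curry _ _ _)).trans
    (Fin.consEquiv fun _ => Fin 2 → V)).trans (Equiv.curry _ _ _).symm

lemma consRowEquiv_apply {m : ℕ} {V : Type*} (p : Fin 2 → V) (y : Fin m × Fin 2 → V)
    (j : Fin (m + 1)) (d : Fin 2) :
    consRowEquiv m V (p, y) (j, d) =
      Fin.cons (α := fun _ => Fin 2 → V) p (fun j d => y (j, d)) j d :=
  rfl

lemma octTuple_consRowEquiv {m : ℕ} (hm : m < k) (x : Fin (k - (m + 1)) → Fin n)
    (p : Fin 2 → Fin n) (y : Fin m × Fin 2 → Fin n) (e : Fin 2) (ε : Fin m → Fin 2) :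
    octTuple k (m + 1) x (consRowEquiv m _ (p, y)) (Fin.cons e ε) =
      octTuple k m (padTuple (k - (m + 1)) x (p e)) y ε := by
  funext i
  simp only [octTuple, padTuple, consRowEquiv_apply]
  by_cases h1 : (i : ℕ) < k - (m + 1)
  · simp [h1, show (i : ℕ) < k - m by omega]
  by_cases h2 : (i : ℕ) < k - m
  · have h0 : (⟨i - (k - (m + 1)), by omega⟩ : Fin (m + 1)) = 0 := Fin.ext (by simp; omega)
    simp only [h1, h2, dite_false, dite_true, h0, Fin.cons_zero]
  · have hsucc : (⟨i - (k - (m + 1)), by omega⟩ : Fin (m + 1)) =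
        Fin.succ ⟨i - (k - m), by omega⟩ := Fin.ext (by simp; omega)
    simp only [h1, h2, dite_false, hsucc, Fin.cons_succ]

lemma octSum_eq_sum_padTuple {m : ℕ} (hm : m < k) (G : (Fin k → Fin n) → ℝ) :
    octSum k m G = ∑ x : Fin (k - (m + 1)) → Fin n, ∑ y : Fin m × Fin 2 → Fin n, ∑ a,
      ∏ ε : Fin m → Fin 2, G (octTuple k m (padTuple (k - (m + 1)) x a) y ε) := by
  rw [octSum, sum_padTuple (k - (m + 1)) (by omega)]
  exact sum_congr rfl fun x _ => sum_comm

lemma octSum_succ {m : ℕ} (hm : m < k) (G : (Fin k → Fin n) → ℝ) :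
    octSum k (m + 1) G = ∑ x : Fin (k - (m + 1)) → Fin n, ∑ y : Fin m × Fin 2 → Fin n,
      (∑ a, ∏ ε : Fin m → Fin 2, G (octTuple k m (padTuple (k - (m + 1)) x a) y ε)) ^ 2 := by
  refine sum_congr rfl fun x _ => ?_
  rw [← (consRowEquiv m _).sum_comp, Fintype.sum_prod_type, sum_comm]
  refine sum_congr rfl fun y _ => ?_
  have hsplit : ∀ p : Fin 2 → Fin n,
      ∏ ε : Fin (m + 1) → Fin 2, G (octTuple k (m + 1) x (consRowEquiv m _ (p, y)) ε) =
        (∏ ε, G (octTuple k m (padTuple (k - (m + 1)) x (p 0)) y ε)) *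
          ∏ ε, G (octTuple k m (padTuple (k - (m + 1)) x (p 1)) y ε) := fun p => by
    rw [← (Fin.consEquiv fun _ => Fin 2).prod_comp, Fintype.prod_prod_type, Fin.prod_univ_two]
    simp only [Fin.consEquiv, Equiv.coe_fn_mk, octTuple_consRowEquiv hm]
  simp only [hsplit]
  rw [← (piFinTwoEquiv fun _ => Fin n).symm.sum_comp, Fintype.sum_prod_type, sq, sum_mul_sum]
  rfl

lemma octSum_succ_nonneg {m : ℕ} (hm : m < k) (G : (Fin k → Fin n) → ℝ) :
    0 ≤ octSum k (m + 1) G := by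
  rw [octSum_succ hm]
  positivity

lemma octTuple_padTuple_apply_of_ne {m : ℕ} (x : Fin (k - (m + 1)) → Fin n) (a b : Fin n)
    (y : Fin m × Fin 2 → Fin n) (ε : Fin m → Fin 2) {j : Fin k} (hj : (j : ℕ) ≠ k - (m + 1)) :
    octTuple k m (padTuple (k - (m + 1)) x a) y ε j =
      octTuple k m (padTuple (k - (m + 1)) x b) y ε j := by
  simp only [octTuple, padTuple]
  split_ifs <;> first | rfl | omega

/-- Cauchy–Schwarz over all coordinates except `k - (m + 1)`, which becomes the next doubled
coordinate. -/
lemma octSum_mul_sq_le {m : ℕ} (hm : m < k) (G W : (Fin k → Fin n) → ℝ)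
    (hW : ∀ z, |W z| ≤ 1)
    (hW_indep : ∀ z z', (∀ j : Fin k, (j : ℕ) ≠ k - (m + 1) → z j = z' j) → W z = W z') :
    octSum k m (G * W) ^ 2 ≤ n ^ (k + m - 1) * octSum k (m + 1) G := by
  rcases isEmpty_or_nonempty (Fin n) with hn | ⟨⟨a₀⟩⟩
  · have : IsEmpty (Fin (k - m) → Fin n) := by
      have : Nonempty (Fin (k - m)) := ⟨⟨0, by omega⟩⟩
      infer_instance
    rw [octSum, univ_eq_empty, sum_empty, zero_pow two_ne_zero]
    exact mul_nonneg (by positivity) (octSum_succ_nonneg hm G)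
  let ι := (Fin (k - (m + 1)) → Fin n) × (Fin m × Fin 2 → Fin n)
  let f : ι → ℝ := fun w =>
    ∑ a, ∏ ε : Fin m → Fin 2, G (octTuple k m (padTuple (k - (m + 1)) w.1 a) w.2 ε)
  let c : ι → ℝ := fun w =>
    ∏ ε : Fin m → Fin 2, W (octTuple k m (padTuple (k - (m + 1)) w.1 a₀) w.2 ε)
  have hsplit : octSum k m (G * W) = ∑ w, f w * c w := by
    rw [octSum_eq_sum_padTuple hm, Fintype.sum_prod_type]
    refine sum_congr rfl fun x _ => sum_congr rfl fun y _ => ?_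
    rw [sum_mul]
    refine sum_congr rfl fun a _ => ?_
    simp only [Pi.mul_apply, prod_mul_distrib, c]
    congr 1
    exact prod_congr rfl fun ε _ => hW_indep _ _ fun j hj =>
      octTuple_padTuple_apply_of_ne _ _ _ _ _ hj
  have hc : ∀ w, c w ^ 2 ≤ 1 := fun w => by
    rw [← sq_abs, sq_le_one_iff_abs_le_one, abs_abs, abs_prod]
    exact prod_le_one (fun _ _ => abs_nonneg _) fun _ _ => hW _
  have hcard : (Fintype.card ι : ℝ) = (n : ℝ) ^ (k + m - 1) := by
    simp only [ι, Fintype.card_prod, Fintype.card_fun, Fintype.card_fin]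
    rw [← pow_add, Nat.cast_pow]
    congr 1
    omega
  calc octSum k m (G * W) ^ 2 ≤ (∑ w, f w ^ 2) * ∑ w, c w ^ 2 := by
        rw [hsplit]
        exact sum_mul_sq_le_sq_mul_sq _ _ _
    _ ≤ octSum k (m + 1) G * n ^ (k + m - 1) := by
        rw [octSum_succ hm, ← Fintype.sum_prod_type', ← hcard, ← Finset.card_univ,
          ← nsmul_one, ← sum_const]
        exact mul_le_mul_of_nonneg_left (sum_le_sum fun w _ => hc w)
          (sum_nonneg fun _ _ => sq_nonneg _)
    _ = n ^ (k + m - 1) * octSum k (m + 1) G := mul_comm _ _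

end OctSum

section EdgeSign

variable {n k ℓ : ℕ}

noncomputable def edgeSign (H : Finset (Finset (Fin n))) (z : Fin k → Fin n) : ℝ :=
  if image z univ ∈ H then -1 else 1

lemma abs_edgeSign (H : Finset (Finset (Fin n))) (z : Fin k → Fin n) :
    |edgeSign H z| = 1 := by
  unfold edgeSign
  split_ifs <;> simp

def octIndex (k ℓ : ℕ) (ε : Fin ℓ → Fin 2) (i : Fin k) : Fin (k - ℓ) ⊕ (Fin ℓ × Fin 2) :=
  if h : (i : ℕ) < k - ℓ then .inl ⟨i, h⟩
  else
    have hi : (i : ℕ) - (k - ℓ) < ℓ := by have := i.isLt; omega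
    .inr (⟨i - (k - ℓ), hi⟩, ε ⟨i - (k - ℓ), hi⟩)

lemma octTuple_eq_comp_octIndex (x : Fin (k - ℓ) → Fin n) (y : Fin ℓ × Fin 2 → Fin n)
    (ε : Fin ℓ → Fin 2) : octTuple k ℓ x y ε = Sum.elim x y ∘ octIndex k ℓ ε := by
  funext i
  simp only [octTuple, octIndex, Function.comp_apply]
  split_ifs <;> rfl

lemma octIndex_injective (ε : Fin ℓ → Fin 2) : Function.Injective (octIndex k ℓ ε) := by
  intro i i' h
  simp only [octIndex] at h
  split_ifs at h <;> simp only [Sum.inl.injEq, Sum.inr.injEq, Prod.mk.injEq,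
    Fin.mk.injEq] at h <;> omega

lemma octIndex_image_injective (hℓ : ℓ ≤ k) :
    Function.Injective fun ε : Fin ℓ → Fin 2 => image (octIndex k ℓ ε) univ := by
  intro ε ε' h
  funext j
  have hj : Sum.inr (j, ε' j) ∈ image (octIndex k ℓ ε') univ := by
    refine mem_image.mpr ⟨⟨k - ℓ + j, by omega⟩, mem_univ _, ?_⟩
    simp [octIndex]
  rw [← show image (octIndex k ℓ ε) univ = image (octIndex k ℓ ε') univ from h] at hj
  obtain ⟨i, -, hi⟩ := mem_image.mp hj
  simp only [octIndex] at hi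
  split_ifs at hi
  simp only [Sum.inr.injEq, Prod.mk.injEq] at hi
  obtain ⟨rfl, hε⟩ := hi
  exact hε

lemma octTuple_injective {x : Fin (k - ℓ) → Fin n} {y : Fin ℓ × Fin 2 → Fin n}
    (hxy : Function.Injective (Sum.elim x y)) (ε : Fin ℓ → Fin 2) :
    Function.Injective (octTuple k ℓ x y ε) := by
  rw [octTuple_eq_comp_octIndex]
  exact hxy.comp (octIndex_injective ε)

lemma prod_edgeSign_octTuple (hℓ : ℓ ≤ k) (H : Finset (Finset (Fin n)))
    (x : Fin (k - ℓ) → Fin n) (y : Fin ℓ × Fin 2 → Fin n)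
    (hxy : Function.Injective (Sum.elim x y)) :
    ∏ ε, edgeSign H (octTuple k ℓ x y ε) = (-1) ^ #(octSet k ℓ x y ∩ H) := by
  set T := fun ε : Fin ℓ → Fin 2 => image (octTuple k ℓ x y ε) univ
  have hT : T = image (Sum.elim x y) ∘ fun ε => image (octIndex k ℓ ε) univ := by
    funext ε
    simp only [T, octTuple_eq_comp_octIndex, Function.comp_apply, image_image]
  have hT_inj : Function.Injective T :=
    hT ▸ (image_injective hxy).comp (octIndex_image_injective hℓ)
  have hoct : octSet k ℓ x y = image T univ := by
    refine filter_true_of_mem fun s hs => ?_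
    obtain ⟨ε, -, rfl⟩ := mem_image.mp hs
    rw [card_image_of_injective _ (octTuple_injective hxy ε), card_univ, Fintype.card_fin]
  rw [hoct, ← filter_mem_eq_inter, filter_image, card_image_of_injective _ hT_inj]
  simp only [edgeSign, prod_ite, prod_const, one_pow, mul_one, T]

lemma abs_octSum_edgeSign_sub_devSum_le (hℓ : ℓ ≤ k) (H : Finset (Finset (Fin n))) :
    |octSum k ℓ (edgeSign H) - devSum k ℓ H| ≤ 2 * ((k + ℓ) ^ 2 * n ^ (k + ℓ - 1) : ℕ) := by
  let term : (Fin (k - ℓ) → Fin n) × (Fin ℓ × Fin 2 → Fin n) → ℝ := fun w =>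
    ∏ ε, edgeSign H (octTuple k ℓ w.1 w.2 ε) - (-1) ^ #(octSet k ℓ w.1 w.2 ∩ H)
  have hterm : ∀ w, |term w| ≤ if ¬Function.Injective (Sum.elim w.1 w.2) then 2 else 0 := by
    intro w
    by_cases hw : Function.Injective (Sum.elim w.1 w.2)
    · simp [term, hw, prod_edgeSign_octTuple hℓ H w.1 w.2 hw]
    · rw [if_pos hw]
      refine (abs_sub _ _).trans ?_
      rw [abs_prod, abs_pow, abs_neg, abs_one, one_pow]
      simp only [abs_edgeSign, prod_const_one]
      norm_num
  have hcard : Fintype.card (Fin (k - ℓ)) + Fintype.card (Fin ℓ × Fin 2) = k + ℓ := by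
    simp only [Fintype.card_fin, Fintype.card_prod]
    omega
  calc |octSum k ℓ (edgeSign H) - devSum k ℓ H| = |∑ w, term w| := by
        simp only [octSum, devSum, term, Fintype.sum_prod_type, sum_sub_distrib]
    _ ≤ ∑ w, if ¬Function.Injective (Sum.elim w.1 w.2) then (2 : ℝ) else 0 :=
        (abs_sum_le_sum_abs _ _).trans (sum_le_sum fun w _ => hterm w)
    _ = 2 * #{w : (Fin (k - ℓ) → Fin n) × (Fin ℓ × Fin 2 → Fin n) |
          ¬Function.Injective (Sum.elim w.1 w.2)} := by
        rw [sum_ite, sum_const, sum_const_zero, add_zero, nsmul_eq_mul, mul_comm]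
    _ ≤ 2 * ((k + ℓ) ^ 2 * n ^ (k + ℓ - 1) : ℕ) := by
        gcongr
        have := card_filter_not_injective_sumElim_le (α := Fin (k - ℓ)) (β := Fin ℓ × Fin 2)
          (V := Fin n)
        rwa [hcard, Fintype.card_fin] at this

noncomputable def devBound (k ℓ : ℕ) (H : Finset (Finset (Fin n))) : ℝ :=
  |devSum k ℓ H| + 2 * ((k + ℓ) ^ 2 * n ^ (k + ℓ - 1) : ℕ)

lemma devBound_nonneg (k ℓ : ℕ) (H : Finset (Finset (Fin n))) : 0 ≤ devBound k ℓ H := by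
  unfold devBound
  positivity

lemma octSum_edgeSign_le_devBound (hℓ : ℓ ≤ k) (H : Finset (Finset (Fin n))) :
    octSum k ℓ (edgeSign H) ≤ devBound k ℓ H := by
  have := abs_octSum_edgeSign_sub_devSum_le hℓ H
  rw [devBound]
  linarith [le_abs_self (octSum k ℓ (edgeSign H) - devSum k ℓ H), le_abs_self (devSum k ℓ H)]

lemma isLittleO_devBound (hk : 0 < k) {H : HSeq} (h : Dev k ℓ H) :
    (fun n => devBound k ℓ (H n)) =o[atTop] fun n => (n : ℝ) ^ (k + ℓ) := by
  refine h.abs_left.add ?_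
  have hpow : (fun n : ℕ => (n : ℝ) ^ (k + ℓ - 1)) =o[atTop] fun n => (n : ℝ) ^ (k + ℓ) :=
    (isLittleO_pow_pow_atTop_of_lt (by omega)).comp_tendsto tendsto_natCast_atTop_atTop
  simpa only [Nat.cast_mul, Nat.cast_pow, ← mul_assoc] using
    hpow.const_mul_left (2 * ((k + ℓ : ℕ) : ℝ) ^ 2)

end EdgeSign

section Cascade

variable {n k t ℓ : ℕ}

def fiberIndicator (β : Fin k → Fin t) (S : Fin t → Finset (Finset (Fin n))) (i : Fin t)
    (z : Fin k → Fin n) : ℝ :=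
  if fiberImage β z i ∈ S i then 1 else 0

def tailParts (β : Fin k → Fin t) (m : ℕ) : Finset (Fin t) :=
  {i | ∀ j : Fin k, k - m ≤ j → β j = i}

noncomputable def cascadeWeight (H : Finset (Finset (Fin n))) (β : Fin k → Fin t)
    (S : Fin t → Finset (Finset (Fin n))) (m : ℕ) : (Fin k → Fin n) → ℝ :=
  fun z => edgeSign H z * ∏ i ∈ tailParts β m, fiberIndicator β S i z

lemma tailParts_zero (β : Fin k → Fin t) : tailParts β 0 = univ := by
  ext i
  simp only [tailParts, mem_filter, mem_univ, true_and, iff_true]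
  exact fun j hj => absurd j.isLt (by omega)

lemma tailParts_succ_subset (β : Fin k → Fin t) (m : ℕ) :
    tailParts β (m + 1) ⊆ tailParts β m := fun i hi => by
  simp only [tailParts, mem_filter, mem_univ, true_and] at hi ⊢
  exact fun j hj => hi j (by omega)

lemma tailParts_eq_empty (β : Fin k → Fin t) {a b : Fin k} (hab : β a ≠ β b) {m : ℕ}
    (ha : k - m ≤ a) (hb : k - m ≤ b) : tailParts β m = ∅ := by
  refine eq_empty_of_forall_notMem fun i hi => ?_
  simp only [tailParts, mem_filter, mem_univ, true_and] at hi
  exact hab ((hi a ha).trans (hi b hb).symm)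

lemma fiberIndicator_congr (β : Fin k → Fin t) (S : Fin t → Finset (Finset (Fin n))) {i : Fin t}
    {z z' : Fin k → Fin n} (h : ∀ j, β j = i → z j = z' j) :
    fiberIndicator β S i z = fiberIndicator β S i z' := by
  have : fiberImage β z i = fiberImage β z' i :=
    image_congr fun j hj => h j (mem_filter.mp hj).2
  simp only [fiberIndicator, this]

lemma abs_prod_fiberIndicator_le_one (β : Fin k → Fin t) (S : Fin t → Finset (Finset (Fin n)))
    (s : Finset (Fin t)) (z : Fin k → Fin n) : |∏ i ∈ s, fiberIndicator β S i z| ≤ 1 := by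
  rw [abs_prod]
  refine prod_le_one (fun _ _ => abs_nonneg _) fun i _ => ?_
  unfold fiberIndicator
  split_ifs <;> simp

/-- A part that leaves `tailParts` at step `m` does not contain the coordinate `k - (m + 1)`. -/
lemma prod_fiberIndicator_tailParts_sdiff_congr (β : Fin k → Fin t)
    (S : Fin t → Finset (Finset (Fin n))) {m : ℕ} (hm : m < k) {z z' : Fin k → Fin n}
    (h : ∀ j : Fin k, (j : ℕ) ≠ k - (m + 1) → z j = z' j) :
    ∏ i ∈ tailParts β m \ tailParts β (m + 1), fiberIndicator β S i z =
      ∏ i ∈ tailParts β m \ tailParts β (m + 1), fiberIndicator β S i z' := by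
  refine prod_congr rfl fun i hi => fiberIndicator_congr β S fun j hj => h j fun hjm => ?_
  simp only [tailParts, Finset.mem_sdiff, mem_filter, mem_univ, true_and, not_forall] at hi
  obtain ⟨hin, j₀, hj₀, hj₀i⟩ := hi
  have : j₀ = j := Fin.ext (by have := hin j₀; grind)
  exact hj₀i (this ▸ hj)

lemma cascadeWeight_eq_mul (H : Finset (Finset (Fin n))) (β : Fin k → Fin t)
    (S : Fin t → Finset (Finset (Fin n))) (m : ℕ) :
    cascadeWeight H β S m = cascadeWeight H β S (m + 1) *
      fun z => ∏ i ∈ tailParts β m \ tailParts β (m + 1), fiberIndicator β S i z := by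
  funext z
  simp only [cascadeWeight, Pi.mul_apply, mul_assoc]
  rw [mul_comm (∏ i ∈ tailParts β (m + 1), _), prod_sdiff (tailParts_succ_subset β m)]

lemma octSum_cascadeWeight_pow_le (H : Finset (Finset (Fin n))) (β : Fin k → Fin t)
    (S : Fin t → Finset (Finset (Fin n))) {m : ℕ} (hm : m < k) :
    octSum k 0 (cascadeWeight H β S 0) ^ 2 ^ (m + 1) ≤
      (n : ℝ) ^ (k * 2 ^ (m + 1) - k - (m + 1)) * octSum k (m + 1) (cascadeWeight H β S (m + 1)) :=
  pow_two_pow_le_of_sq_le (X := fun m => octSum k m (cascadeWeight H β S m)) (Nat.cast_nonneg n)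
    (fun m hm => cascadeWeight_eq_mul H β S m ▸ octSum_mul_sq_le hm _ _
      (abs_prod_fiberIndicator_le_one β S _) fun _ _ =>
        prod_fiberIndicator_tailParts_sdiff_congr β S hm) m hm

lemma cascadeWeight_of_tailParts_eq_empty (H : Finset (Finset (Fin n))) {β : Fin k → Fin t}
    (S : Fin t → Finset (Finset (Fin n))) {m : ℕ} (hm : tailParts β m = ∅) :
    cascadeWeight H β S m = edgeSign H := by
  funext z
  simp [cascadeWeight, hm]

lemma octSum_cascadeWeight_zero (H : Finset (Finset (Fin n))) (β : Fin k → Fin t)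
    (S : Fin t → Finset (Finset (Fin n))) (hS : ∀ i, ∀ s ∈ S i, #s = #{j | β j = i}) :
    octSum k 0 (cascadeWeight H β S 0) =
      (∏ i, ((#{j | β j = i})! : ℝ)) * (∏ i, (#(S i) : ℝ) - 2 * eCount H S) := by
  have hweight : ∀ z, cascadeWeight H β S 0 z = if ∀ i, fiberImage β z i ∈ S i then
      1 - 2 * (if univ.biUnion (fiberImage β z) ∈ H then 1 else 0) else 0 := fun z => by
    simp only [cascadeWeight, tailParts_zero, fiberIndicator, prod_boole, mem_univ, forall_const,
      biUnion_fiberImage, edgeSign]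
    split_ifs <;> norm_num
  rw [octSum_zero, sum_congr rfl fun z _ => hweight z,
    sum_fiberImage_mem β S hS fun σ => 1 - 2 * if univ.biUnion σ ∈ H then 1 else 0,
    sum_sub_distrib, ← mul_sum, sum_boole, sum_const, Fintype.card_piFinset, eCount]
  simp

lemma abs_eCount_sub_half_prod_le (H : Finset (Finset (Fin n))) (β : Fin k → Fin t)
    (S : Fin t → Finset (Finset (Fin n))) (hS : ∀ i, ∀ s ∈ S i, #s = #{j | β j = i}) :
    |(eCount H S : ℝ) - 1 / 2 * ∏ i, (#(S i) : ℝ)| ≤ |octSum k 0 (cascadeWeight H β S 0)| := by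
  set c : ℝ := ∏ i, ((#{j | β j = i})! : ℝ)
  have hc : 1 ≤ c := by
    simp only [c]
    exact_mod_cast Nat.one_le_iff_ne_zero.mpr <|
      prod_ne_zero_iff.mpr fun _ _ => Nat.factorial_ne_zero _
  rw [octSum_cascadeWeight_zero H β S hS, abs_mul, abs_of_pos (by positivity : 0 < c)]
  calc |(eCount H S : ℝ) - 1 / 2 * ∏ i, (#(S i) : ℝ)|
      = 1 / 2 * |∏ i, (#(S i) : ℝ) - 2 * eCount H S| := by
        rw [show (eCount H S : ℝ) - 1 / 2 * ∏ i, (#(S i) : ℝ) =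
            -(1 / 2) * (∏ i, (#(S i) : ℝ) - 2 * eCount H S) by ring, abs_mul, abs_neg,
          abs_of_pos one_half_pos]
    _ ≤ c * |∏ i, (#(S i) : ℝ) - 2 * eCount H S| := by
        gcongr
        linarith

/-- Since two of the last `ℓ` coordinates lie in different parts, no indicator of an `S i`
survives the `ℓ` Cauchy–Schwarz steps. -/
lemma abs_eCount_sub_half_prod_pow_le (hℓ : ℓ ≤ k) (H : Finset (Finset (Fin n)))
    (β : Fin k → Fin t) {a b : Fin k} (hab : β a ≠ β b) (ha : k - ℓ ≤ a) (hb : k - ℓ ≤ b)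
    (S : Fin t → Finset (Finset (Fin n))) (hS : ∀ i, ∀ s ∈ S i, #s = #{j | β j = i}) :
    |(eCount H S : ℝ) - 1 / 2 * ∏ i, (#(S i) : ℝ)| ^ 2 ^ ℓ ≤
      n ^ (k * 2 ^ ℓ - k - ℓ) * devBound k ℓ H := by
  obtain ⟨m, rfl⟩ : ∃ m, ℓ = m + 1 := ⟨ℓ - 1, by have := a.isLt; omega⟩
  have hcascade := octSum_cascadeWeight_pow_le H β S (m := m) (by omega)
  rw [cascadeWeight_of_tailParts_eq_empty H S (tailParts_eq_empty β hab ha hb)] at hcascade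
  calc |(eCount H S : ℝ) - 1 / 2 * ∏ i, (#(S i) : ℝ)| ^ 2 ^ (m + 1)
      ≤ octSum k 0 (cascadeWeight H β S 0) ^ 2 ^ (m + 1) := by
        rw [← (Nat.even_pow.mpr ⟨even_two, by omega⟩).pow_abs (octSum k 0 _)]
        exact pow_le_pow_left₀ (abs_nonneg _) (abs_eCount_sub_half_prod_le H β S hS) _
    _ ≤ n ^ (k * 2 ^ (m + 1) - k - (m + 1)) * octSum k (m + 1) (edgeSign H) := hcascade
    _ ≤ _ := by
        gcongr
        exact octSum_edgeSign_le_devBound hℓ H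

end Cascade

end QuasirandomHypergraph

open QuasirandomHypergraph

theorem dev_implies_expand_general (k ℓ : ℕ) (hk : 2 ≤ k) (hℓ2 : 2 ≤ ℓ) (hℓk : ℓ ≤ k)
    (π : List ℕ) (hπ : ProperPartition k π)
    (H : HSeq) (h : Dev k ℓ H) :
    Expand k (1/2 : ℝ) π H := by
  obtain ⟨hlen, hpos, hsum⟩ := hπ
  obtain ⟨β, hβ, a, b, hab, ha, hb⟩ := exists_card_fiber_eq_of_ne hk hlen
    (fun i => π.get i) (fun i => hpos _ (List.get_mem π i))
    (by simp [hsum])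
  set q := 2 ^ ℓ
  set E := k * q - k - ℓ with hE_def
  have hE : E + (k + ℓ) = k * q := by
    have : k + ℓ ≤ k * q :=
      le_trans (by nlinarith) (Nat.mul_le_mul_left k (Nat.lt_two_pow_self (n := ℓ)))
    omega
  refine ⟨fun n => ((n : ℝ) ^ E * devBound k ℓ (H n)) ^ (q : ℝ)⁻¹, ?_, fun n S hS => ?_⟩
  · refine isLittleO_rpow_inv_of_isLittleO_pow (by positivity) ?_
    simpa only [← pow_add, hE] using (isBigO_refl (fun n : ℕ => (n : ℝ) ^ E) atTop).mul_isLittleO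
      (isLittleO_devBound (by omega) h)
  · rw [Real.le_rpow_inv_iff_of_pos (abs_nonneg _)
      (mul_nonneg (by positivity) (devBound_nonneg k ℓ _)) (by positivity),
      Real.rpow_natCast]
    exact abs_eCount_sub_half_prod_pow_le hℓk (H n) β hab (by omega) (by omega) S
      fun i s hs => by rw [hS i s hs, hβ]

/-- `Dev(ℓ)` implies `Expand_{1/2}(π)` for every proper partition `π`. -/
theorem dev_implies_expand (k ℓ : ℕ) (hk : 2 ≤ k) (hℓ2 : 2 ≤ ℓ) (hℓk : ℓ ≤ k)
    (π : List ℕ) (hπ : ProperPartition k π)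
    (H : HSeq) (hH : UniformSeq k H) (h : Dev k ℓ H) :
    Expand k (1/2 : ℝ) π H :=
  dev_implies_expand_general k ℓ hk hℓ2 hℓk π hπ H h
end
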